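/- arXiv:1410.1582 — 5 statements merged into one kernel-verified Lean document; each statement's English description precedes it below -/
import Mathlib

section
/- There exists a function V : ℂ → ℂ such that: V is (real, Fréchet) differentiable at every point of ℂ; the pointwise derivative ∂V/∂z̄ = (1/2)(V_x + i·V_y), which is defined everywhere, is continuous on all of ℂ; and the pointwise derivative ∂V/∂z = (1/2)(V_x − i·V_y) is unbounded on every neighborhood of the origin. In particular V is differentiable everywhere but not continuously differentiable. -/
open Complex MeasureTheory Set Metric Topology
open scoped ContDiff

/-- Pointwise partial derivative of `u` in the `x`-direction (junk value if it does not exist). -/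
noncomputable def pdx (u : ℂ → ℂ) (z : ℂ) : ℂ := deriv (fun t : ℝ => u (z + ↑t)) 0

/-- Pointwise partial derivative of `u` in the `y`-direction (junk value if it does not exist). -/
noncomputable def pdy (u : ℂ → ℂ) (z : ℂ) : ℂ := deriv (fun t : ℝ => u (z + ↑t * Complex.I)) 0

/-- Both pointwise partial derivatives `u_x`, `u_y` exist at `z`. -/
def PartialsAt (u : ℂ → ℂ) (z : ℂ) : Prop :=
  (∃ a, HasDerivAt (fun t : ℝ => u (z + ↑t)) a 0) ∧
  (∃ b, HasDerivAt (fun t : ℝ => u (z + ↑t * Complex.I)) b 0)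

/-- The pointwise Wirtinger derivative `∂u/∂z̄ = (u_x + i u_y)/2`. -/
noncomputable def dzbar (u : ℂ → ℂ) (z : ℂ) : ℂ := (pdx u z + Complex.I * pdy u z) / 2

/-- The pointwise Wirtinger derivative `∂u/∂z = (u_x - i u_y)/2`. -/
noncomputable def dzz (u : ℂ → ℂ) (z : ℂ) : ℂ := (pdx u z - Complex.I * pdy u z) / 2

/-- Condition (*): the partial derivatives `u_x`, `u_y` exist at every point of `Ω`
except possibly at countably many points. -/
def CondStar (u : ℂ → ℂ) (Ω : Set ℂ) : Prop :=
  ∃ S : Set ℂ, S.Countable ∧ ∀ z ∈ Ω \ S, PartialsAt u z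

/-- The open rectangle `(a₁,b₁) × (a₂,b₂)` in `ℂ = ℝ²`. -/
def Rect (a₁ b₁ a₂ b₂ : ℝ) : Set ℂ := {z : ℂ | z.re ∈ Set.Ioo a₁ b₁ ∧ z.im ∈ Set.Ioo a₂ b₂}

/-
`V` is a sum of bumps `bₙ(z) = 2ⁿ (z - cₙ) χₙ(|z - cₙ|²)` centred at `cₙ = 2⁻ⁿ → 0`, where `χₙ = 1`
near `0`, so that `∂bₙ/∂z (cₙ) = 2ⁿ`. For such a radial profile `∂/∂z̄ (w χ(|w|²)) = w² χ'(|w|²)`,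
which is small as soon as `t χ'(t)` is: a cutoff making its transition in the variable `log t`,
spread over many scales, achieves `|t χ'(t)| ≤ 4⁻ⁿ`. Hence `|∂bₙ/∂z̄| ≤ 2⁻ⁿ`, and the Weierstrass
test makes `∂V/∂z̄ = Σ ∂bₙ/∂z̄` continuous. The bumps have disjoint supports, small enough that
`|V(z)| ≤ |z|²`, which gives differentiability at `0`.
-/

section Wirtinger

variable {u v : ℂ → ℂ} {D : ℂ →L[ℝ] ℂ} {z : ℂ}

lemma hasDerivAt_add_ofReal_mul (z w : ℂ) : HasDerivAt (fun t : ℝ => z + t * w) w 0 := by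
  simpa using ((ofRealCLM.hasDerivAt (x := 0)).mul_const w).const_add z

lemma pdx_eq_of_hasFDerivAt (h : HasFDerivAt u D z) : pdx u z = D 1 := by
  simpa [pdx, Function.comp_def] using
    (HasFDerivAt.comp_hasDerivAt (x := (0 : ℝ)) (by simpa using h)
      (hasDerivAt_add_ofReal_mul z 1)).deriv

lemma pdy_eq_of_hasFDerivAt (h : HasFDerivAt u D z) : pdy u z = D I :=
  (HasFDerivAt.comp_hasDerivAt (x := (0 : ℝ)) (by simpa using h)
    (hasDerivAt_add_ofReal_mul z I)).deriv

lemma dzbar_eq_of_hasFDerivAt (h : HasFDerivAt u D z) : dzbar u z = (D 1 + I * D I) / 2 := by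
  rw [dzbar, pdx_eq_of_hasFDerivAt h, pdy_eq_of_hasFDerivAt h]

lemma dzz_eq_of_hasFDerivAt (h : HasFDerivAt u D z) : dzz u z = (D 1 - I * D I) / 2 := by
  rw [dzz, pdx_eq_of_hasFDerivAt h, pdy_eq_of_hasFDerivAt h]

lemma dzbar_eq_zero_of_eventuallyEq_zero (h : u =ᶠ[𝓝 z] 0) : dzbar u z = 0 := by
  simp [dzbar_eq_of_hasFDerivAt ((hasFDerivAt_const 0 z).congr_of_eventuallyEq h)]

lemma pdx_congr (h : u =ᶠ[𝓝 z] v) : pdx u z = pdx v z := by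
  simpa [pdx, Function.comp_def] using
    (h.comp_tendsto (by simpa using (hasDerivAt_add_ofReal_mul z 1).continuousAt.tendsto)).deriv_eq

lemma pdy_congr (h : u =ᶠ[𝓝 z] v) : pdy u z = pdy v z :=
  (h.comp_tendsto (by simpa using (hasDerivAt_add_ofReal_mul z I).continuousAt.tendsto)).deriv_eq

lemma dzbar_congr (h : u =ᶠ[𝓝 z] v) : dzbar u z = dzbar v z := by
  rw [dzbar, dzbar, pdx_congr h, pdy_congr h]

lemma dzz_congr (h : u =ᶠ[𝓝 z] v) : dzz u z = dzz v z := by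
  rw [dzz, dzz, pdx_congr h, pdy_congr h]

end Wirtinger

noncomputable def radialBump (c : ℂ) (φ : ℝ → ℝ) (z : ℂ) : ℂ := (z - c) * φ (‖z - c‖ ^ 2)

section RadialBump

variable {c z : ℂ} {φ : ℝ → ℝ} {φ' : ℝ}

lemma hasFDerivAt_radialBump (hφ : HasDerivAt φ φ' (‖z - c‖ ^ 2)) :
    HasFDerivAt (radialBump c φ)
      ((z - c) • ofRealCLM.comp (φ' • 2 • innerSL ℝ (z - c)) +
        (φ (‖z - c‖ ^ 2) : ℂ) • ContinuousLinearMap.id ℝ ℂ) z := by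
  have hsub : HasFDerivAt (fun w : ℂ => w - c) (ContinuousLinearMap.id ℝ ℂ) z :=
    (hasFDerivAt_id z).sub_const c
  exact hsub.mul (ofRealCLM.hasFDerivAt.comp z (hφ.comp_hasFDerivAt z hsub.norm_sq))

lemma differentiable_radialBump (hφ : Differentiable ℝ φ) : Differentiable ℝ (radialBump c φ) :=
  fun _ => (hasFDerivAt_radialBump (hφ _).hasDerivAt).differentiableAt

lemma dzbar_radialBump (hφ : HasDerivAt φ φ' (‖z - c‖ ^ 2)) :
    dzbar (radialBump c φ) z = (z - c) ^ 2 * φ' := by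
  rw [dzbar_eq_of_hasFDerivAt (hasFDerivAt_radialBump hφ)]
  have hw := Complex.re_add_im (z - c)
  simp only [sub_re, sub_im, ofReal_sub] at hw
  simp [Complex.inner]
  linear_combination (z - c) * (φ' : ℂ) * hw + (φ (‖z - c‖ ^ 2) / 2 : ℂ) * I_sq

lemma dzz_radialBump_self (hφ : DifferentiableAt ℝ φ 0) : dzz (radialBump c φ) c = φ 0 := by
  have hφ' : HasDerivAt φ (deriv φ 0) (‖c - c‖ ^ 2) := by simpa using hφ.hasDerivAt
  rw [dzz_eq_of_hasFDerivAt (hasFDerivAt_radialBump hφ')]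
  simp only [sub_self, map_zero, smul_zero, ContinuousLinearMap.comp_zero, norm_zero,
    ne_eq, OfNat.ofNat_ne_zero, not_false_eq_true, zero_pow, add_apply, smul_apply, zero_apply,
    smul_eq_mul, mul_zero, ContinuousLinearMap.id_apply, mul_one, zero_add]
  linear_combination (-(φ 0 : ℂ) / 2) * I_sq

lemma continuous_dzbar_radialBump (hφ : ContDiff ℝ 1 φ) : Continuous (dzbar (radialBump c φ)) := by
  have h : dzbar (radialBump c φ) = fun z => (z - c) ^ 2 * deriv φ (‖z - c‖ ^ 2) :=
    funext fun z => dzbar_radialBump ((hφ.differentiable one_ne_zero _).hasDerivAt)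
  rw [h]
  have := hφ.continuous_deriv le_rfl
  fun_prop

end RadialBump

lemma exists_abs_deriv_smoothTransition_le :
    ∃ K > 0, ∀ x, |deriv Real.smoothTransition x| ≤ K := by
  have hconst : ∀ x ∉ Icc (0 : ℝ) 1, deriv Real.smoothTransition x = 0 := by
    intro x hx
    rcases not_and_or.1 hx with hx | hx <;> rw [not_le] at hx
    · have h : Real.smoothTransition =ᶠ[𝓝 x] fun _ => 0 :=
        (eventually_lt_nhds hx).mono fun y hy => Real.smoothTransition.zero_of_nonpos hy.le
      rw [h.deriv_eq, deriv_const]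
    · have h : Real.smoothTransition =ᶠ[𝓝 x] fun _ => 1 :=
        (eventually_gt_nhds hx).mono fun y hy => Real.smoothTransition.one_of_one_le hy.le
      rw [h.deriv_eq, deriv_const]
  obtain ⟨C, hC⟩ := (Real.smoothTransition.contDiff.continuous_deriv
    le_rfl).bounded_above_of_compact_support (HasCompactSupport.intro isCompact_Icc hconst)
  exact ⟨max C 1, by positivity, fun x => (hC x).trans (le_max_left C 1)⟩

/-- A smooth step from `1` (for `t ≤ r e⁻ᴸ`) to `0` (for `t ≥ r`) in the variable `log t`; the `if`
only replaces the junk values of `Real.log` at `t ≤ 0`. -/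
noncomputable def logCutoff (r L t : ℝ) : ℝ :=
  if t ≤ 0 then 1 else Real.smoothTransition ((Real.log r - Real.log t) / L)

section LogCutoff

variable {r L : ℝ}

lemma logCutoff_eventuallyEq_one (hr : 0 < r) (hL : 0 < L) {t : ℝ} (ht : t < r * Real.exp (-L)) :
    logCutoff r L =ᶠ[𝓝 t] fun _ => 1 := by
  filter_upwards [eventually_lt_nhds ht] with x hx
  by_cases h0 : x ≤ 0
  · simp [logCutoff, h0]
  have hlog := Real.log_lt_log (not_le.1 h0) hx
  rw [Real.log_mul hr.ne' (Real.exp_pos _).ne', Real.log_exp] at hlog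
  rw [logCutoff, if_neg h0]
  exact Real.smoothTransition.one_of_one_le (by rw [le_div_iff₀ hL]; linarith)

lemma logCutoff_eventuallyEq {t : ℝ} (ht : 0 < t) :
    logCutoff r L =ᶠ[𝓝 t] fun x => Real.smoothTransition ((Real.log r - Real.log x) / L) :=
  (eventually_gt_nhds ht).mono fun _ hx => if_neg (not_le.2 hx)

lemma contDiff_logCutoff (hr : 0 < r) (hL : 0 < L) : ContDiff ℝ 1 (logCutoff r L) := by
  refine contDiff_iff_contDiffAt.2 fun t => ?_
  rcases lt_or_ge t (r * Real.exp (-L)) with ht | ht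
  · exact contDiffAt_const.congr_of_eventuallyEq (logCutoff_eventuallyEq_one hr hL ht)
  · have ht0 : 0 < t := lt_of_lt_of_le (by positivity) ht
    exact (Real.smoothTransition.contDiff.contDiffAt.comp t
      ((contDiffAt_const.sub (Real.contDiffAt_log.2 ht0.ne')).div_const L)).congr_of_eventuallyEq
      (logCutoff_eventuallyEq ht0)

lemma abs_logCutoff_le_one (t : ℝ) : |logCutoff r L t| ≤ 1 := by
  unfold logCutoff
  split_ifs
  · simp
  · rw [abs_of_nonneg (Real.smoothTransition.nonneg _)]
    exact Real.smoothTransition.le_one _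

lemma logCutoff_eq_zero (hr : 0 < r) (hL : 0 < L) {t : ℝ} (ht : r < t) : logCutoff r L t = 0 := by
  rw [logCutoff, if_neg (by linarith)]
  exact Real.smoothTransition.zero_of_nonpos
    (div_nonpos_of_nonpos_of_nonneg (by linarith [Real.log_lt_log hr ht]) hL.le)

lemma abs_mul_deriv_logCutoff_le (hr : 0 < r) (hL : 0 < L) {K : ℝ}
    (hK : ∀ x, |deriv Real.smoothTransition x| ≤ K) (t : ℝ) :
    |t * deriv (logCutoff r L) t| ≤ K / L := by
  rcases lt_or_ge t (r * Real.exp (-L)) with ht | ht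
  · rw [(logCutoff_eventuallyEq_one hr hL ht).deriv_eq, deriv_const, mul_zero, abs_zero]
    exact div_nonneg ((abs_nonneg _).trans (hK 0)) hL.le
  have ht0 : 0 < t := lt_of_lt_of_le (by positivity) ht
  set s := (Real.log r - Real.log t) / L
  have hd := ((Real.smoothTransition.contDiff (n := 1)).differentiable one_ne_zero
    s).hasDerivAt.comp t (((Real.hasDerivAt_log ht0.ne').const_sub (Real.log r)).div_const L)
  rw [Function.comp_def] at hd
  rw [(logCutoff_eventuallyEq ht0).deriv_eq, hd.deriv,
    show t * (deriv Real.smoothTransition s * (-t⁻¹ / L)) = -(deriv Real.smoothTransition s / L) by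
      field_simp, abs_neg, abs_div, abs_of_pos hL]
  exact div_le_div_of_nonneg_right (hK s) hL.le

end LogCutoff

structure IsLogCutoff (g : ℝ → ℝ) (r ε : ℝ) : Prop where
  contDiff : ContDiff ℝ 1 g
  apply_zero : g 0 = 1
  abs_le_one : ∀ t, |g t| ≤ 1
  eq_zero_of_lt : ∀ t, r < t → g t = 0
  abs_mul_deriv_le : ∀ t, |t * deriv g t| ≤ ε

lemma exists_isLogCutoff {r ε : ℝ} (hr : 0 < r) (hε : 0 < ε) : ∃ g, IsLogCutoff g r ε := by
  obtain ⟨K, hK, hderiv⟩ := exists_abs_deriv_smoothTransition_le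
  have hL : 0 < K / ε := div_pos hK hε
  refine ⟨logCutoff r (K / ε), contDiff_logCutoff hr hL, by simp [logCutoff], abs_logCutoff_le_one,
    fun t => logCutoff_eq_zero hr hL, fun t => ?_⟩
  simpa [div_div_cancel₀ hK.ne'] using abs_mul_deriv_logCutoff_le hr hL hderiv t

namespace WirtingerExample

noncomputable def center (n : ℕ) : ℝ := 2⁻¹ ^ n

noncomputable def radius (n : ℕ) : ℝ := 8⁻¹ ^ (n + 1)

lemma center_pos (n : ℕ) : 0 < center n := by unfold center; positivity

lemma radius_pos (n : ℕ) : 0 < radius n := by unfold radius; positivity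

lemma radius_le_center (n : ℕ) : radius n ≤ center n / 8 := by
  rw [radius, center, pow_succ, div_eq_mul_inv]
  gcongr
  norm_num

lemma two_pow_mul_radius (n : ℕ) : 2 ^ n * radius n = center n ^ 2 / 8 := by
  rw [radius, center, inv_pow, inv_pow, inv_pow, pow_succ,
    show (8 : ℝ) ^ n = (2 ^ n) ^ 3 by rw [← pow_mul, mul_comm, pow_mul]; norm_num]
  field_simp

lemma center_div_two_le_norm_sub {m n : ℕ} (h : m ≠ n) :
    center n / 2 ≤ ‖(center n : ℂ) - center m‖ := by
  have key : ∀ {i j : ℕ}, i < j → center j ≤ center i / 2 := fun {i j} hij => by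
    rw [center, center, div_eq_mul_inv, ← pow_succ]
    exact pow_le_pow_of_le_one (by norm_num) (by norm_num) hij
  rw [← ofReal_sub, norm_real, Real.norm_eq_abs]
  rcases h.lt_or_gt with h | h
  · have := key h; have := center_pos n
    rw [abs_sub_comm, abs_of_pos (by linarith)]; linarith
  · have := key h; have := center_pos m
    rw [abs_of_pos (by linarith)]; linarith

lemma radius_lt_norm_sub_of_near {m n : ℕ} (hmn : m ≠ n) {w : ℂ}
    (hw : ‖w - center n‖ < center n / 4) : radius m < ‖w - center m‖ := by
  have hn := center_div_two_le_norm_sub hmn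
  have hm := center_div_two_le_norm_sub hmn.symm
  rw [norm_sub_rev] at hm
  have := norm_sub_le_norm_sub_add_norm_sub (center n : ℂ) w (center m)
  rw [norm_sub_rev (center n : ℂ) w] at this
  linarith [radius_le_center m, center_pos m]

lemma radius_lt_norm_sub_of_far {z w : ℂ} (hz : ∀ n, center n / 4 ≤ ‖z - center n‖)
    (hw : ‖w - z‖ < ‖z‖ / 16) (m : ℕ) : radius m < ‖w - center m‖ := by
  by_contra! h
  have h1 := norm_sub_le_norm_sub_add_norm_sub z w (center m)
  have h2 := norm_sub_norm_le z (center m)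
  rw [norm_sub_rev z w] at h1
  rw [norm_real, Real.norm_of_nonneg (center_pos m).le] at h2
  linarith [hz m, radius_le_center m, center_pos m]

lemma eventually_radius_lt_of_near {n : ℕ} {z : ℂ} (hz : ‖z - center n‖ < center n / 4) :
    ∀ᶠ w : ℂ in 𝓝 z, ∀ m ≠ n, radius m < ‖w - center m‖ :=
  ((by fun_prop : Continuous fun w : ℂ => ‖w - center n‖).continuousAt.eventually_lt
    continuousAt_const hz).mono fun _ hw _ hm => radius_lt_norm_sub_of_near hm hw

lemma exists_eventually_radius_lt {z : ℂ} (hz : z ≠ 0) :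
    ∃ n, ∀ᶠ w : ℂ in 𝓝 z, ∀ m ≠ n, radius m < ‖w - center m‖ := by
  by_cases h : ∃ n, ‖z - center n‖ < center n / 4
  · obtain ⟨n, hn⟩ := h
    exact ⟨n, eventually_radius_lt_of_near hn⟩
  · push Not at h
    refine ⟨0, ((by fun_prop : Continuous fun w : ℂ => ‖w - z‖).continuousAt.eventually_lt
      continuousAt_const
      (by simpa using norm_pos_iff.2 hz : ‖z - z‖ < ‖z‖ / 16)).mono fun _ hw m _ => ?_⟩
    exact radius_lt_norm_sub_of_far h hw m

noncomputable def cutoff (n : ℕ) : ℝ → ℝ :=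
  (exists_isLogCutoff (pow_pos (radius_pos n) 2) (by positivity : (0 : ℝ) < 4⁻¹ ^ n)).choose

lemma isLogCutoff_cutoff (n : ℕ) : IsLogCutoff (cutoff n) (radius n ^ 2) (4⁻¹ ^ n) :=
  (exists_isLogCutoff (pow_pos (radius_pos n) 2) (by positivity : (0 : ℝ) < 4⁻¹ ^ n)).choose_spec

noncomputable def bump (n : ℕ) : ℂ → ℂ := radialBump (center n) fun t => 2 ^ n * cutoff n t

noncomputable def V (z : ℂ) : ℂ := ∑' n, bump n z

lemma contDiff_profile (n : ℕ) : ContDiff ℝ 1 fun t => 2 ^ n * cutoff n t :=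
  contDiff_const.mul (isLogCutoff_cutoff n).contDiff

lemma bump_eq_zero {n : ℕ} {z : ℂ} (h : radius n < ‖z - center n‖) : bump n z = 0 := by
  have h2 : radius n ^ 2 < ‖z - center n‖ ^ 2 := pow_lt_pow_left₀ h (radius_pos n).le two_ne_zero
  simp [bump, radialBump, (isLogCutoff_cutoff n).eq_zero_of_lt _ h2]

lemma bump_eventuallyEq_zero {n : ℕ} {z : ℂ} (h : radius n < ‖z - center n‖) :
    bump n =ᶠ[𝓝 z] 0 :=
  (continuousAt_const.eventually_lt
    (by fun_prop : Continuous fun w : ℂ => ‖w - center n‖).continuousAt h).mono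
    fun _ => bump_eq_zero

lemma norm_bump_le (n : ℕ) (z : ℂ) : ‖bump n z‖ ≤ 2 ^ n * ‖z - center n‖ := by
  rw [bump, radialBump, norm_mul, norm_real, Real.norm_eq_abs, abs_mul,
    abs_of_pos (by positivity), mul_comm]
  gcongr
  exact mul_le_of_le_one_right (by positivity) ((isLogCutoff_cutoff n).abs_le_one _)

lemma dzbar_bump (n : ℕ) (z : ℂ) :
    dzbar (bump n) z =
      (z - center n) ^ 2 * (2 ^ n * deriv (cutoff n) (‖z - center n‖ ^ 2) : ℝ) := by
  have hd := (((isLogCutoff_cutoff n).contDiff.differentiable one_ne_zero)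
    (‖z - center n‖ ^ 2)).hasDerivAt.const_mul (2 ^ n : ℝ)
  exact dzbar_radialBump hd

lemma norm_dzbar_bump_le (n : ℕ) (z : ℂ) : ‖dzbar (bump n) z‖ ≤ 2⁻¹ ^ n := by
  calc ‖dzbar (bump n) z‖
      = 2 ^ n * |‖z - center n‖ ^ 2 * deriv (cutoff n) (‖z - center n‖ ^ 2)| := by
        rw [dzbar_bump, norm_mul, norm_pow, norm_real, Real.norm_eq_abs, abs_mul, abs_mul,
          abs_of_pos (by positivity : (0 : ℝ) < 2 ^ n), abs_of_nonneg (sq_nonneg ‖z - center n‖)]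
        ring
    _ ≤ 2 ^ n * 4⁻¹ ^ n := by gcongr; exact (isLogCutoff_cutoff n).abs_mul_deriv_le _
    _ = 2⁻¹ ^ n := by rw [← mul_pow]; norm_num

lemma dzz_bump_center (n : ℕ) : dzz (bump n) (center n) = 2 ^ n := by
  rw [bump, dzz_radialBump_self ((contDiff_profile n).differentiable one_ne_zero 0),
    (isLogCutoff_cutoff n).apply_zero]
  simp

lemma V_eq_bump {n : ℕ} {z : ℂ} (h : ∀ m ≠ n, radius m < ‖z - center m‖) : V z = bump n z :=
  tsum_eq_single n fun m hm => bump_eq_zero (h m hm)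

lemma norm_V_le (z : ℂ) : ‖V z‖ ≤ ‖z‖ ^ 2 := by
  by_cases h : ∃ n, ‖z - center n‖ ≤ radius n
  · obtain ⟨n, hn⟩ := h
    have hc := center_pos n
    have hr := radius_le_center n
    rw [V_eq_bump (n := n) fun m hm => radius_lt_norm_sub_of_near hm (by linarith)]
    have hz : 7 / 8 * center n ≤ ‖z‖ := by
      have := norm_sub_norm_le (center n : ℂ) z
      rw [norm_real, Real.norm_of_nonneg hc.le, norm_sub_rev] at this
      linarith
    calc ‖bump n z‖ ≤ 2 ^ n * radius n :=
          (norm_bump_le n z).trans (by gcongr)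
      _ = center n ^ 2 / 8 := two_pow_mul_radius n
      _ ≤ (7 / 8 * center n) ^ 2 := by nlinarith
      _ ≤ ‖z‖ ^ 2 := by gcongr
  · push Not at h
    rw [V_eq_bump (n := 0) fun m _ => h m, bump_eq_zero (h 0), norm_zero]
    positivity

lemma hasFDerivAt_V_zero : HasFDerivAt V (0 : ℂ →L[ℝ] ℂ) 0 := by
  have hV0 : V 0 = 0 := by simpa using norm_V_le 0
  rw [hasFDerivAt_iff_isLittleO_nhds_zero]
  simpa [hV0] using (Asymptotics.isBigO_of_le (𝓝 0) fun z => by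
    simpa using norm_V_le z).trans_isLittleO (Asymptotics.isLittleO_norm_pow_id one_lt_two)

lemma differentiableAt_V (z : ℂ) : DifferentiableAt ℝ V z := by
  rcases eq_or_ne z 0 with rfl | hz
  · exact hasFDerivAt_V_zero.differentiableAt
  obtain ⟨n, hn⟩ := exists_eventually_radius_lt hz
  exact (differentiable_radialBump ((contDiff_profile n).differentiable one_ne_zero)
    z).congr_of_eventuallyEq (hn.mono fun _ => V_eq_bump)

lemma dzbar_V (z : ℂ) : dzbar V z = ∑' n, dzbar (bump n) z := by
  rcases eq_or_ne z 0 with rfl | hz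
  · have hbump (n : ℕ) : bump n =ᶠ[𝓝 0] 0 := bump_eventuallyEq_zero <| by
      rw [zero_sub, norm_neg, norm_real, Real.norm_of_nonneg (center_pos n).le]
      linarith [radius_le_center n, center_pos n]
    simp [dzbar_eq_of_hasFDerivAt hasFDerivAt_V_zero, dzbar_eq_zero_of_eventuallyEq_zero (hbump _)]
  obtain ⟨n, hn⟩ := exists_eventually_radius_lt hz
  rw [dzbar_congr (hn.mono fun _ => V_eq_bump), tsum_eq_single n fun m hm =>
    dzbar_eq_zero_of_eventuallyEq_zero (hn.mono fun _ hw => bump_eq_zero (hw m hm))]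

lemma continuous_dzbar_V : Continuous (dzbar V) := by
  rw [funext dzbar_V]
  exact continuous_tsum (fun n => continuous_dzbar_radialBump (contDiff_profile n))
    (summable_geometric_of_lt_one (by norm_num) (by norm_num)) norm_dzbar_bump_le

lemma dzz_V_center (n : ℕ) : dzz V (center n) = 2 ^ n := by
  have hnear : ‖(center n : ℂ) - center n‖ < center n / 4 := by simpa using center_pos n
  rw [dzz_congr ((eventually_radius_lt_of_near hnear).mono fun _ => V_eq_bump), dzz_bump_center]

lemma exists_lt_norm_dzz_V {U : Set ℂ} (hU : U ∈ 𝓝 0) (C : ℝ) : ∃ z ∈ U, C < ‖dzz V z‖ := by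
  have hcenter : Filter.Tendsto (fun n => (center n : ℂ)) Filter.atTop (𝓝 0) := by
    simpa [center, Function.comp_def] using (continuous_ofReal.tendsto 0).comp
      (tendsto_pow_atTop_nhds_zero_of_lt_one (by norm_num : (0 : ℝ) ≤ 2⁻¹) (by norm_num))
  obtain ⟨n, hnU, hnC⟩ := ((hcenter.eventually hU).and
    ((tendsto_pow_atTop_atTop_of_one_lt one_lt_two).eventually_gt_atTop C)).exists
  exact ⟨center n, hnU, by simpa [dzz_V_center] using hnC⟩

end WirtingerExample

/-- Example (ex4.4): a differentiable function with continuous ∂V/∂z̄ but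
∂V/∂z unbounded near the origin. -/
theorem stmt8 : ∃ V : ℂ → ℂ,
    (∀ z, DifferentiableAt ℝ V z) ∧
    Continuous (dzbar V) ∧
    (∀ U ∈ 𝓝 (0 : ℂ), ∀ C : ℝ, ∃ z ∈ U, C < ‖dzz V z‖) :=
  ⟨WirtingerExample.V, WirtingerExample.differentiableAt_V, WirtingerExample.continuous_dzbar_V,
    fun _ hU C => WirtingerExample.exists_lt_norm_dzz_V hU C⟩
end

section
/- Let Ω₂ ⊆ ℂ be open and let f : Ω₂ → ℂ be holomorphic with a simple zero at w₀ ∈ Ω₂ (i.e. f(w₀) = 0 and f′(w₀) ≠ 0). Then there exist r₀ > 0 and a holomorphic function h : D(0, r₀) → Ω₂ on the open disk of radius r₀ centered at 0 such that h(0) = w₀, h is injective on D(0, r₀) with open image (so h : D(0,r₀) → h(D(0,r₀)) is invertible with holomorphic inverse), and f′(w₀)·ζ·h′(ζ) = f(h(ζ)) for all ζ ∈ D(0, r₀). -/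
/-!
Write `f w = (w - w₀) d(w)` with `d = dslope f w₀`, so `d(w₀) = c := f'(w₀) ≠ 0`. The inverse
`g` of the sought `h` must satisfy `g'/g = c/f = 1/(w - w₀) + p` with `p` holomorphic near `w₀`,
which is solved by `g = (w - w₀) e^Q` for a primitive `Q` of `p`. Since `g'(w₀) = 1`, the inverse
function theorem inverts `g` near `w₀`, and `h = g⁻¹` satisfies
`c ζ h'(ζ) = c g(h ζ) / g'(h ζ) = f(h ζ)`.
-/

open Complex MeasureTheory Set Metric Topology
open scoped ContDiff

lemma exists_ball_subset_forall_dslope_ne_zero {𝕜 E : Type*} [NontriviallyNormedField 𝕜]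
    [NormedAddCommGroup E] [NormedSpace 𝕜 E] {f : 𝕜 → E} {Ω : Set 𝕜} {a : 𝕜}
    (hΩ : Ω ∈ 𝓝 a) (hf : DifferentiableAt 𝕜 f a) (hf' : deriv f a ≠ 0) :
    ∃ ρ > 0, ball a ρ ⊆ Ω ∧ ∀ w ∈ ball a ρ, dslope f a w ≠ 0 := by
  have hne : ∀ᶠ w in 𝓝 a, dslope f a w ≠ 0 :=
    (continuousAt_dslope_same.mpr hf).eventually_ne (by rwa [dslope_same])
  obtain ⟨ρ, hρ, hball⟩ := eventually_nhds_iff_ball.mp (Filter.Eventually.and hΩ hne)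
  exact ⟨ρ, hρ, fun w hw => (hball w hw).1, fun w hw => (hball w hw).2⟩

lemma exists_hasDerivAt_sub_mul_exp {u : ℂ → ℂ} {w₀ : ℂ} {ρ : ℝ} (hρ : 0 < ρ)
    (hu : DifferentiableOn ℂ u (ball w₀ ρ)) (hu₀ : u w₀ = 1) :
    ∃ Q : ℂ → ℂ, ∀ w ∈ ball w₀ ρ,
      HasDerivAt (fun w => (w - w₀) * exp (Q w)) (u w * exp (Q w)) w := by
  obtain ⟨Q, hQ⟩ := ((differentiableOn_dslope (ball_mem_nhds w₀ hρ)).mpr hu).isExactOn_ball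
  refine ⟨Q, fun w hw => ?_⟩
  have hu_eq : u w = 1 + (w - w₀) * dslope u w₀ w := by
    rw [← smul_eq_mul, sub_smul_dslope, hu₀]
    ring
  have hsub : HasDerivAt (fun w : ℂ => w - w₀) 1 w := (hasDerivAt_id w).sub_const w₀
  have hQw : HasDerivAt Q (dslope u w₀ w) w := hQ w hw
  exact (hsub.fun_mul hQw.cexp).congr_deriv (by rw [hu_eq]; ring)

/-- `g` linearizes the vector field `f ∂_w` near its simple zero: `g` pushes it forward to
`f'(w₀) ζ ∂_ζ`. -/
lemma exists_linearizing_coordinate {f : ℂ → ℂ} {w₀ : ℂ} {ρ : ℝ} (hρ : 0 < ρ)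
    (hf : DifferentiableOn ℂ f (ball w₀ ρ)) (hzero : f w₀ = 0)
    (hd : ∀ w ∈ ball w₀ ρ, dslope f w₀ w ≠ 0) :
    ∃ g G : ℂ → ℂ, g w₀ = 0 ∧ ∀ w ∈ ball w₀ ρ,
      HasDerivAt g (G w) w ∧ G w ≠ 0 ∧ deriv f w₀ * g w = f w * G w := by
  set c := deriv f w₀
  have hc : c ≠ 0 := by simpa [dslope_same] using hd w₀ (mem_ball_self hρ)
  have hdiff : DifferentiableOn ℂ (fun w => c / dslope f w₀ w) (ball w₀ ρ) :=
    (differentiableOn_const c).div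
      ((differentiableOn_dslope (ball_mem_nhds w₀ hρ)).mpr hf) hd
  obtain ⟨Q, hQ⟩ := exists_hasDerivAt_sub_mul_exp hρ hdiff (by simp [dslope_same, hc, c])
  refine ⟨_, _, by simp, fun w hw => ⟨hQ w hw, ?_, ?_⟩⟩
  · exact mul_ne_zero (div_ne_zero hc (hd w hw)) (exp_ne_zero _)
  · have hfw : f w = (w - w₀) * dslope f w₀ w := by
      simpa [hzero] using (sub_smul_dslope f w₀ w).symm
    rw [hfw]
    field_simp [hd w hw]

lemma exists_local_inverse_of_hasDerivAt {g G : ℂ → ℂ} {w₀ : ℂ} {ρ : ℝ} (hρ : 0 < ρ)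
    (hg : ∀ w ∈ ball w₀ ρ, HasDerivAt g (G w) w) (hG : ∀ w ∈ ball w₀ ρ, G w ≠ 0) :
    ∃ r > 0, ∃ h : ℂ → ℂ, h (g w₀) = w₀ ∧ MapsTo h (ball (g w₀) r) (ball w₀ ρ) ∧
      LeftInvOn g h (ball (g w₀) r) ∧ IsOpen (h '' ball (g w₀) r) ∧
      ∀ ζ ∈ ball (g w₀) r, HasDerivAt h (G (h ζ))⁻¹ ζ := by
  have hw₀ := mem_ball_self (x := w₀) hρ
  have hstrict : HasStrictDerivAt g (G w₀) w₀ := by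
    have hdiff : DifferentiableOn ℂ g (ball w₀ ρ) := fun w hw =>
      (hg w hw).differentiableAt.differentiableWithinAt
    simpa [(hg w₀ hw₀).deriv] using (hdiff.analyticAt (ball_mem_nhds w₀ hρ)).hasStrictDerivAt
  have hequiv := hstrict.hasStrictFDerivAt_equiv (hG w₀ hw₀)
  set e := hequiv.toOpenPartialHomeomorph g
  have he : (e : ℂ → ℂ) = g := hequiv.toOpenPartialHomeomorph_coe
  have hsymm : e.symm (g w₀) = w₀ := by
    simpa [he] using e.left_inv hequiv.mem_toOpenPartialHomeomorph_source
  obtain ⟨r, hr, hsub⟩ : ∃ r > 0, ball (g w₀) r ⊆ e.target ∩ e.symm ⁻¹' ball w₀ ρ :=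
    isOpen_iff.mp (e.isOpen_inter_preimage_symm isOpen_ball) _
      ⟨hequiv.image_mem_toOpenPartialHomeomorph_target, by simpa [hsymm] using hw₀⟩
  have htarget : ball (g w₀) r ⊆ e.symm.source := fun ζ hζ => (hsub hζ).1
  refine ⟨r, hr, e.symm, hsymm, fun ζ hζ => (hsub hζ).2, fun ζ hζ => ?_,
    e.symm.isOpen_image_of_subset_source isOpen_ball htarget, fun ζ hζ => ?_⟩
  · simpa [he] using e.right_inv (hsub hζ).1
  · refine e.hasDerivAt_symm (hsub hζ).1 (hG _ (hsub hζ).2) ?_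
    rw [he]
    exact hg _ (hsub hζ).2

/-- Lemma (lem4.5): a holomorphic substitution near a simple zero. -/
theorem stmt12 (Ω₂ : Set ℂ) (hΩ₂ : IsOpen Ω₂) (f : ℂ → ℂ)
    (hf : DifferentiableOn ℂ f Ω₂) (w₀ : ℂ) (hw₀ : w₀ ∈ Ω₂)
    (hzero : f w₀ = 0) (hsimple : deriv f w₀ ≠ 0) :
    ∃ r₀ : ℝ, 0 < r₀ ∧ ∃ h : ℂ → ℂ,
      DifferentiableOn ℂ h (ball (0 : ℂ) r₀) ∧
      MapsTo h (ball (0 : ℂ) r₀) Ω₂ ∧ h 0 = w₀ ∧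
      InjOn h (ball (0 : ℂ) r₀) ∧ IsOpen (h '' ball (0 : ℂ) r₀) ∧
      (∃ hinv : ℂ → ℂ, DifferentiableOn ℂ hinv (h '' ball (0 : ℂ) r₀) ∧
        ∀ ζ ∈ ball (0 : ℂ) r₀, hinv (h ζ) = ζ) ∧
      ∀ ζ ∈ ball (0 : ℂ) r₀, deriv f w₀ * ζ * deriv h ζ = f (h ζ) := by
  have hΩ₂w₀ := hΩ₂.mem_nhds hw₀
  obtain ⟨ρ, hρ, hρΩ₂, hd⟩ :=
    exists_ball_subset_forall_dslope_ne_zero hΩ₂w₀ (hf.differentiableAt hΩ₂w₀) hsimple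
  obtain ⟨g, G, hg₀, hg⟩ := exists_linearizing_coordinate hρ (hf.mono hρΩ₂) hzero hd
  obtain ⟨r, hr, h, hh₀, hmaps, hinv, hopen, hderiv⟩ :=
    exists_local_inverse_of_hasDerivAt hρ (fun w hw => (hg w hw).1) (fun w hw => (hg w hw).2.1)
  rw [hg₀] at hh₀ hmaps hinv hopen hderiv
  refine ⟨r, hr, h, fun ζ hζ => (hderiv ζ hζ).differentiableAt.differentiableWithinAt,
    fun ζ hζ => hρΩ₂ (hmaps hζ), hh₀, hinv.injOn, hopen, ⟨g, ?_, hinv⟩, fun ζ hζ => ?_⟩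
  · rintro _ ⟨ζ, hζ, rfl⟩
    exact (hg _ (hmaps hζ)).1.differentiableAt.differentiableWithinAt
  · obtain ⟨-, hG, hlin⟩ := hg _ (hmaps hζ)
    calc deriv f w₀ * ζ * deriv h ζ = deriv f w₀ * g (h ζ) * (G (h ζ))⁻¹ := by
          rw [(hderiv ζ hζ).deriv, hinv hζ]
      _ = f (h ζ) := by rw [hlin, mul_assoc, mul_inv_cancel₀ hG, mul_one]
end

section
/- Let Ω₁, Ω₂ ⊆ ℂ be open, let f : Ω₂ → ℂ be holomorphic with only simple zeros (f′(w) ≠ 0 at every zero w of f), let g : Ω₁ → ℂ, and let z₀ ∈ Ω₁ and w₀ ∈ Ω₂. If there is a continuous function G : Ω₁ → ℂ whose partial derivatives exist at every point of Ω₁ and satisfy ∂G/∂z̄ = g(z) everywhere, then there exist an open neighborhood Ω₁⁰ ⊆ Ω₁ of z₀ and a non-constant continuous function u : Ω₁⁰ → Ω₂ whose partial derivatives exist at every point of Ω₁⁰, such that ∂u/∂z̄ = f(u(z))·g(z) at every point of Ω₁⁰ and u(z₀) = w₀. -/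
open Complex MeasureTheory Set Metric Topology
open scoped ContDiff

/-!
Near `w₀` choose a holomorphic coordinate `ζ = K w` in which the vector field `f` becomes
linear, `K' * f = L ∘ K`: a primitive of `1 / f` (`L = 1`) if `f w₀ ≠ 0`, and
`K w = (w - w₀) * exp (m w)` (`L ζ = f' w₀ * ζ`) at a simple zero. Since `∂/∂z̄` obeys the
chain rule through holomorphic maps and kills holomorphic terms, `u = K⁻¹ ∘ ξ` solves
`∂u/∂z̄ = f(u) g` as soon as `∂ξ/∂z̄ = L(ξ) g`, which is solved explicitly by
`ξ = G + c (z - z₀) + const`, resp. `ξ = (z - z₀) * exp (f' w₀ * (G - G z₀))`.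
The term `c (z - z₀)`, with `c ∈ {0, 1}`, keeps `ξ` non-constant even where `G` is constant.
-/

open Filter

theorem AnalyticAt.dslope {𝕜 E : Type*} [NontriviallyNormedField 𝕜] [NormedAddCommGroup E]
    [NormedSpace 𝕜 E] {f : 𝕜 → E} {a : 𝕜} (hf : AnalyticAt 𝕜 f a) :
    AnalyticAt 𝕜 (dslope f a) a :=
  let ⟨_, hp⟩ := hf
  ⟨_, hp.has_fpower_series_dslope_fslope⟩

theorem AnalyticAt.exists_eventually_hasDerivAt {f : ℂ → ℂ} {c : ℂ} (hf : AnalyticAt ℂ f c) :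
    ∃ F : ℂ → ℂ, ∀ᶠ w in 𝓝 c, HasDerivAt F (f w) w := by
  obtain ⟨r, hr, hfr⟩ := Metric.eventually_nhds_iff_ball.mp hf.eventually_analyticAt
  obtain ⟨F, hF⟩ := DifferentiableOn.isExactOn_ball fun w hw => (hfr w hw).differentiableWithinAt
  exact ⟨F, eventually_of_mem (ball_mem_nhds c hr) hF⟩

theorem not_eventually_nhds_eq {X : Type*} [TopologicalSpace X] (x : X) [(𝓝[≠] x).NeBot] :
    ¬ ∀ᶠ y in 𝓝 x, y = x := by
  intro h
  obtain ⟨y, hy, hne⟩ :=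
    ((eventually_nhdsWithin_of_eventually_nhds (s := {x}ᶜ) h).and
      self_mem_nhdsWithin).exists
  exact hne hy

theorem exists_not_eventuallyEq_add_mul_sub {𝕜 : Type*} [NontriviallyNormedField 𝕜] (G : 𝕜 → 𝕜)
    (z₀ : 𝕜) : ∃ c : 𝕜, ¬ (fun z => G z + c * (z - z₀)) =ᶠ[𝓝 z₀] fun _ => G z₀ := by
  by_contra! h
  refine not_eventually_nhds_eq z₀ ?_
  filter_upwards [h 0, h 1] with z h₀ h₁
  linear_combination h₁ - h₀

theorem exists_localInverse {𝕜 : Type*} [NontriviallyNormedField 𝕜] [CompleteSpace 𝕜]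
    {K K' : 𝕜 → 𝕜} {w₀ : 𝕜} (hstrict : HasStrictDerivAt K (K' w₀) w₀)
    (hK : ∀ᶠ w in 𝓝 w₀, HasDerivAt K (K' w) w ∧ K' w ≠ 0) :
    ∃ φ : 𝕜 → 𝕜, φ (K w₀) = w₀ ∧ Tendsto φ (𝓝 (K w₀)) (𝓝 w₀) ∧
      ∀ᶠ ζ in 𝓝 (K w₀), K (φ ζ) = ζ ∧ HasDerivAt φ (K' (φ ζ))⁻¹ ζ := by
  have hequiv := hstrict.hasStrictFDerivAt_equiv hK.self_of_nhds.2
  set Φ := hequiv.toOpenPartialHomeomorph K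
  have htarget : Φ.target ∈ 𝓝 (K w₀) :=
    Φ.open_target.mem_nhds hequiv.image_mem_toOpenPartialHomeomorph_target
  refine ⟨Φ.symm, hequiv.localInverse_apply_image, hequiv.localInverse_tendsto, ?_⟩
  filter_upwards [htarget, hequiv.localInverse_tendsto.eventually hK] with ζ hζ hKζ
  exact ⟨Φ.right_inv hζ, Φ.hasDerivAt_symm hζ hKζ.2 hKζ.1⟩

def HasDzbarAt (u : ℂ → ℂ) (a z : ℂ) : Prop :=
  ∃ px py : ℂ, HasDerivAt (fun t : ℝ => u (z + t)) px 0 ∧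
    HasDerivAt (fun t : ℝ => u (z + t * I)) py 0 ∧ (px + I * py) / 2 = a

section HasDzbarAt

variable {u v φ : ℂ → ℂ} {a b φ' z : ℂ}

theorem hasDzbarAt_iff : HasDzbarAt u a z ↔ PartialsAt u z ∧ dzbar u z = a := by
  constructor
  · rintro ⟨px, py, hx, hy, rfl⟩
    exact ⟨⟨⟨px, hx⟩, ⟨py, hy⟩⟩, by rw [dzbar, pdx, pdy, hx.deriv, hy.deriv]⟩
  · rintro ⟨⟨⟨px, hx⟩, ⟨py, hy⟩⟩, rfl⟩
    exact ⟨px, py, hx, hy, by rw [dzbar, pdx, pdy, hx.deriv, hy.deriv]⟩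

theorem hasDzbarAt_id (z : ℂ) : HasDzbarAt id 0 z := by
  have hline : ∀ v : ℂ, HasDerivAt (fun t : ℝ => id (z + t * v)) v 0 := fun v => by
    simpa using ((hasDerivAt_id (0 : ℝ)).ofReal_comp.mul_const v).const_add z
  exact ⟨1, I, by simpa using hline 1, hline I, by rw [I_mul_I]; ring⟩

theorem HasDerivAt.comp_hasDzbarAt (hφ : HasDerivAt φ φ' (u z)) (hu : HasDzbarAt u a z) :
    HasDzbarAt (φ ∘ u) (φ' * a) z := by
  obtain ⟨px, py, hx, hy, rfl⟩ := hu
  exact ⟨φ' * px, φ' * py, hφ.comp_of_eq 0 hx (by simp),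
    hφ.comp_of_eq 0 hy (by simp), by ring⟩

theorem HasDerivAt.hasDzbarAt {u' : ℂ} (hu : HasDerivAt u u' z) : HasDzbarAt u 0 z := by
  simpa using hu.comp_hasDzbarAt (hasDzbarAt_id z)

theorem HasDzbarAt.add (hu : HasDzbarAt u a z) (hv : HasDzbarAt v b z) :
    HasDzbarAt (fun z => u z + v z) (a + b) z := by
  obtain ⟨px, py, hx, hy, rfl⟩ := hu
  obtain ⟨qx, qy, hx', hy', rfl⟩ := hv
  exact ⟨px + qx, py + qy, hx.add hx', hy.add hy', by ring⟩

theorem HasDzbarAt.mul (hu : HasDzbarAt u a z) (hv : HasDzbarAt v b z) :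
    HasDzbarAt (fun z => u z * v z) (a * v z + u z * b) z := by
  obtain ⟨px, py, hx, hy, rfl⟩ := hu
  obtain ⟨qx, qy, hx', hy', rfl⟩ := hv
  exact ⟨px * v z + u z * qx, py * v z + u z * qy, by simpa using hx.fun_mul hx',
    by simpa using hy.fun_mul hy', by ring⟩

end HasDzbarAt

theorem exists_linearizingCoord_of_ne_zero {f : ℂ → ℂ} {w₀ : ℂ} (hf : AnalyticAt ℂ f w₀)
    (h₀ : f w₀ ≠ 0) :
    ∃ K K' : ℂ → ℂ, ∀ᶠ w in 𝓝 w₀, HasDerivAt K (K' w) w ∧ K' w ≠ 0 ∧ K' w * f w = 1 := by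
  obtain ⟨F, hF⟩ := (hf.inv h₀).exists_eventually_hasDerivAt
  refine ⟨F, fun w => (f w)⁻¹, ?_⟩
  filter_upwards [hF, hf.continuousAt.eventually_ne h₀] with w hFw hw
  exact ⟨hFw, inv_ne_zero hw, inv_mul_cancel₀ hw⟩

theorem exists_linearizingCoord_of_simple_zero {f : ℂ → ℂ} {w₀ : ℂ} (hf : AnalyticAt ℂ f w₀)
    (h₀ : f w₀ = 0) (h₁ : deriv f w₀ ≠ 0) :
    ∃ K K' : ℂ → ℂ, K w₀ = 0 ∧ ∀ᶠ w in 𝓝 w₀,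
      HasDerivAt K (K' w) w ∧ K' w ≠ 0 ∧ K' w * f w = deriv f w₀ * K w := by
  set a := deriv f w₀
  set h := dslope f w₀
  have hh : AnalyticAt ℂ h w₀ := hf.dslope
  have hha : h w₀ = a := dslope_same f w₀
  have hh₀ : h w₀ ≠ 0 := hha ▸ h₁
  have hfh : ∀ w, f w = (w - w₀) * h w := fun w => by
    simpa [h₀] using (sub_smul_dslope f w₀ w).symm
  set r := fun w => a / h w
  have hr₀ : r w₀ = 1 := by simp only [r, hha, div_self h₁]
  have hrq : ∀ w, 1 + (w - w₀) * dslope r w₀ w = r w := fun w => by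
    rw [← smul_eq_mul, sub_smul_dslope, hr₀]; ring
  have hr : AnalyticAt ℂ r w₀ := analyticAt_const.fun_div hh hh₀
  -- `K' / K = a / f = 1 / (w - w₀) + dslope r w₀`, so `K = (w - w₀) * exp m` with `m' = dslope r w₀`.
  obtain ⟨m, hm⟩ := hr.dslope.exists_eventually_hasDerivAt
  refine ⟨fun w => (w - w₀) * exp (m w), fun w => exp (m w) * r w, by simp, ?_⟩
  filter_upwards [hm, hh.continuousAt.eventually_ne hh₀] with w hmw hw
  refine ⟨?_, mul_ne_zero (exp_ne_zero _) (div_ne_zero h₁ hw), ?_⟩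
  · refine (((hasDerivAt_id' w).sub_const w₀).fun_mul hmw.cexp).congr_deriv ?_
    rw [← hrq]
    ring
  · rw [hfh]
    simp only [r]
    field_simp

def HasNonconstLocalSolution (Ω₁ Ω₂ : Set ℂ) (f g : ℂ → ℂ) (z₀ w₀ : ℂ) : Prop :=
  ∃ Ω₁' ⊆ Ω₁, IsOpen Ω₁' ∧ z₀ ∈ Ω₁' ∧
    ∃ u : ℂ → ℂ, ContinuousOn u Ω₁' ∧ MapsTo u Ω₁' Ω₂ ∧ (¬ ∃ c, ∀ z ∈ Ω₁', u z = c) ∧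
      (∀ z ∈ Ω₁', PartialsAt u z ∧ dzbar u z = f (u z) * g z) ∧ u z₀ = w₀

theorem exists_solution_of_linearizingCoord {Ω₁ Ω₂ : Set ℂ} (hΩ₁ : IsOpen Ω₁) (hΩ₂ : IsOpen Ω₂)
    {f g K K' L ξ : ℂ → ℂ} {z₀ w₀ : ℂ} (hz₀ : z₀ ∈ Ω₁) (hw₀ : w₀ ∈ Ω₂)
    (hK : ∀ᶠ w in 𝓝 w₀, HasDerivAt K (K' w) w ∧ K' w ≠ 0 ∧ K' w * f w = L (K w))
    (hξ : ContinuousOn ξ Ω₁) (hξ' : ∀ z ∈ Ω₁, HasDzbarAt ξ (L (ξ z) * g z) z)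
    (hξz₀ : ξ z₀ = K w₀) (hξ_ne : ¬ ξ =ᶠ[𝓝 z₀] fun _ => ξ z₀) :
    HasNonconstLocalSolution Ω₁ Ω₂ f g z₀ w₀ := by
  have hstrict : HasStrictDerivAt K (K' w₀) w₀ := by
    have hK_an : AnalyticAt ℂ K w₀ := analyticAt_iff_eventually_differentiableAt.2 <|
      hK.mono fun w hw => hw.1.differentiableAt
    simpa only [hK.self_of_nhds.1.deriv] using hK_an.hasStrictDerivAt
  obtain ⟨φ, hφw₀, hφ_tendsto, hφ⟩ :=
    exists_localInverse hstrict (hK.mono fun w hw => ⟨hw.1, hw.2.1⟩)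
  have hgood : ∀ᶠ ζ in 𝓝 (K w₀), K (φ ζ) = ζ ∧ HasDerivAt φ (K' (φ ζ))⁻¹ ζ ∧
      φ ζ ∈ Ω₂ ∧ K' (φ ζ) ≠ 0 ∧ K' (φ ζ) * f (φ ζ) = L ζ := by
    filter_upwards [hφ, hφ_tendsto.eventually (hK.and (hΩ₂.mem_nhds hw₀))]
    rintro ζ ⟨hKφ, hφ'⟩ ⟨⟨-, hne, hlin⟩, hmem⟩
    exact ⟨hKφ, hφ', hmem, hne, by rwa [hKφ] at hlin⟩
  have hξ_tendsto : Tendsto ξ (𝓝 z₀) (𝓝 (K w₀)) :=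
    hξz₀ ▸ (hξ.continuousAt (hΩ₁.mem_nhds hz₀)).tendsto
  obtain ⟨Ω₁', hΩ₁', hopen, hz₀'⟩ :=
    _root_.eventually_nhds_iff.mp ((hξ_tendsto.eventually hgood).and (hΩ₁.mem_nhds hz₀))
  refine ⟨Ω₁', fun z hz => (hΩ₁' z hz).2, hopen, hz₀', φ ∘ ξ, fun z hz => ?_,
    fun z hz => (hΩ₁' z hz).1.2.2.1, ?_, fun z hz => ?_, by simp [hξz₀, hφw₀]⟩
  · exact (hΩ₁' z hz).1.2.1.continuousAt.comp_continuousWithinAt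
      ((hξ z (hΩ₁' z hz).2).mono fun z hz => (hΩ₁' z hz).2)
  · rintro ⟨c, hc⟩
    refine hξ_ne (eventually_of_mem (hopen.mem_nhds hz₀') fun z hz => ?_)
    rw [← (hΩ₁' z hz).1.1, ← (hΩ₁' z₀ hz₀').1.1]
    exact congrArg K ((hc z hz).trans (hc z₀ hz₀').symm)
  · obtain ⟨⟨hKφ, hφ', -, hne, hlin⟩, hzΩ⟩ := hΩ₁' z hz
    have hval : (K' (φ (ξ z)))⁻¹ * (L (ξ z) * g z) = f ((φ ∘ ξ) z) * g z := by
      rw [Function.comp_apply, ← hlin]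
      field_simp
    exact hasDzbarAt_iff.1 (hval ▸ hφ'.comp_hasDzbarAt (hξ' z hzΩ))

section LocalSolution

variable {Ω₁ Ω₂ : Set ℂ} {f g G : ℂ → ℂ} {z₀ w₀ : ℂ}

theorem exists_solution_of_ne_zero (hΩ₁ : IsOpen Ω₁) (hΩ₂ : IsOpen Ω₂) (hz₀ : z₀ ∈ Ω₁)
    (hw₀ : w₀ ∈ Ω₂) (hf : AnalyticAt ℂ f w₀) (hf₀ : f w₀ ≠ 0) (hG : ContinuousOn G Ω₁)
    (hG' : ∀ z ∈ Ω₁, HasDzbarAt G (g z) z) :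
    HasNonconstLocalSolution Ω₁ Ω₂ f g z₀ w₀ := by
  obtain ⟨K, K', hK⟩ := exists_linearizingCoord_of_ne_zero hf hf₀
  obtain ⟨c, hc⟩ := exists_not_eventuallyEq_add_mul_sub G z₀
  refine exists_solution_of_linearizingCoord (L := fun _ => 1)
    (ξ := fun z => G z + c * (z - z₀) + (K w₀ - G z₀)) hΩ₁ hΩ₂ hz₀ hw₀ hK (by fun_prop)
    (fun z hz => ?_) (by simp) fun h => hc (h.mono fun z hz => by linear_combination hz)
  simpa using ((hG' z hz).add (((hasDerivAt_id' z).sub_const z₀).const_mul c).hasDzbarAt).add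
    (hasDerivAt_const z (K w₀ - G z₀)).hasDzbarAt

theorem exists_solution_of_simple_zero (hΩ₁ : IsOpen Ω₁) (hΩ₂ : IsOpen Ω₂) (hz₀ : z₀ ∈ Ω₁)
    (hw₀ : w₀ ∈ Ω₂) (hf : AnalyticAt ℂ f w₀) (hf₀ : f w₀ = 0) (hf₁ : deriv f w₀ ≠ 0)
    (hG : ContinuousOn G Ω₁) (hG' : ∀ z ∈ Ω₁, HasDzbarAt G (g z) z) :
    HasNonconstLocalSolution Ω₁ Ω₂ f g z₀ w₀ := by
  obtain ⟨K, K', hKw₀, hK⟩ := exists_linearizingCoord_of_simple_zero hf hf₀ hf₁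
  set a := deriv f w₀
  refine exists_solution_of_linearizingCoord (L := fun ζ => a * ζ)
    (ξ := fun z => (z - z₀) * exp (a * (G z - G z₀))) hΩ₁ hΩ₂ hz₀ hw₀ hK (by fun_prop)
    (fun z hz => ?_) (by simp [hKw₀]) fun h => not_eventually_nhds_eq z₀ ?_
  · have hexp : HasDerivAt (fun w => exp (a * (w - G z₀))) (exp (a * (G z - G z₀)) * a) (G z) :=
      by simpa using (((hasDerivAt_id' (G z)).sub_const (G z₀)).const_mul a).cexp
    have h := ((hasDerivAt_id' z).sub_const z₀).hasDzbarAt.mul (hexp.comp_hasDzbarAt (hG' z hz))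
    simp only [Function.comp_def] at h
    convert h using 1
    ring
  · filter_upwards [h] with z hz
    simpa [sub_eq_zero, exp_ne_zero] using hz

end LocalSolution

/-- Theorem (lem4.6): local existence when f has only simple zeros. -/
theorem stmt13 (Ω₁ Ω₂ : Set ℂ) (hΩ₁ : IsOpen Ω₁) (hΩ₂ : IsOpen Ω₂)
    (f : ℂ → ℂ) (hf : DifferentiableOn ℂ f Ω₂)
    (hsimple : ∀ w ∈ Ω₂, f w = 0 → deriv f w ≠ 0)
    (g : ℂ → ℂ) (z₀ : ℂ) (hz₀ : z₀ ∈ Ω₁) (w₀ : ℂ) (hw₀ : w₀ ∈ Ω₂)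
    (G : ℂ → ℂ) (hG : ContinuousOn G Ω₁)
    (hG' : ∀ z ∈ Ω₁, PartialsAt G z ∧ dzbar G z = g z) :
    ∃ Ω₁' : Set ℂ, Ω₁' ⊆ Ω₁ ∧ IsOpen Ω₁' ∧ z₀ ∈ Ω₁' ∧
      ∃ u : ℂ → ℂ, ContinuousOn u Ω₁' ∧ MapsTo u Ω₁' Ω₂ ∧
        (¬ ∃ c, ∀ z ∈ Ω₁', u z = c) ∧
        (∀ z ∈ Ω₁', PartialsAt u z ∧ dzbar u z = f (u z) * g z) ∧
        u z₀ = w₀ := by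
  have hfa : AnalyticAt ℂ f w₀ := hf.analyticAt (hΩ₂.mem_nhds hw₀)
  have hG'' : ∀ z ∈ Ω₁, HasDzbarAt G (g z) z := fun z hz => hasDzbarAt_iff.2 (hG' z hz)
  by_cases hf₀ : f w₀ = 0
  · exact exists_solution_of_simple_zero hΩ₁ hΩ₂ hz₀ hw₀ hfa hf₀ (hsimple w₀ hw₀ hf₀) hG hG''
  · exact exists_solution_of_ne_zero hΩ₁ hΩ₂ hz₀ hw₀ hfa hf₀ hG hG''
end

section
/- Let U ⊆ ℂ² be open, let a₁, a₂, b₁, b₂ : U → ℝ be functions with |b₂| < 1 everywhere, and define J : U → M₄(ℝ) as the 4×4 real matrix with rows (0, −1, a₁, a₂), (1, 0, (a₁b₁b₂ − a₂b₁² − a₁b₁ − a₂)/(b₂ − 1), a₁b₂ − a₂b₁ − a₁), (0, 0, b₁, −1 + b₂), (0, 0, 1 + (b₁² + b₂)/(1 − b₂), −b₁). Define β₁ = (b₂ − i·b₁)/(b₂ − 2 + i·b₁) and β₂ = (a₂ + i·(a₁b₂ − a₂b₁ − a₁))/(b₂ − 2 + i·b₁). Let Ω ⊆ ℂ be open, let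 f = (f¹, f², f³, f⁴) : Ω → U ⊆ ℝ⁴ be a map whose partial derivatives f_x, f_y exist at a point z₀ ∈ Ω, and set h = f¹ + i·f², k = f³ + i·f⁴. Then the equation f_y(z₀) = J(f(z₀))·f_x(z₀) (as vectors in ℝ⁴) holds if and only if ∂h/∂z̄(z₀) = β₂(f(z₀))·conj(∂k/∂z(z₀)) and ∂k/∂z̄(z₀) = β₁(f(z₀))·conj(∂k/∂z(z₀)). -/
/-!
The upper-left `2 × 2` block of `J` is multiplication by `i`, so the first two rows of
`f_y = J f_x` say `h_y = i h_x + A k_x` for a real-linear `A`, i.e. `h_x + i h_y = i A k_x`.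
Multiplying by `b₂ - 2 + i b₁` (nonzero since `b₂ < 1`), this is the first complex equation,
because `i A k_x (b₂ - 2 + i b₁)` equals `(a₂ + i (a₁ b₂ - a₂ b₁ - a₁)) conj (k_x - i k_y)` as soon
as the last two rows hold. Those rows, with the denominator `1 - b₂` cleared, are equivalent to the
imaginary and real parts of `(k_x + i k_y)(b₂ - 2 + i b₁) = (b₂ - i b₁) conj (k_x - i k_y)`.
-/

open Complex MeasureTheory Set Metric Topology
open scoped ContDiff

noncomputable def normalJ (a₁ a₂ b₁ b₂ : ℝ) : Matrix (Fin 4) (Fin 4) ℝ :=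
  Matrix.of
    ![![0, -1, a₁, a₂],
      ![1, 0, (a₁ * b₁ * b₂ - a₂ * b₁ ^ 2 - a₁ * b₁ - a₂) / (b₂ - 1), a₁ * b₂ - a₂ * b₁ - a₁],
      ![0, 0, b₁, -1 + b₂],
      ![0, 0, 1 + (b₁ ^ 2 + b₂) / (1 - b₂), -b₁]]

lemma eq_div_mul_conj_half_iff {L N R D : ℂ} (hD : D ≠ 0) :
    L / 2 = N / D * starRingEnd ℂ (R / 2) ↔ L * D = N * starRingEnd ℂ R := by
  rw [map_div₀, map_ofNat, div_mul_div_comm,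
    div_eq_div_iff two_ne_zero (mul_ne_zero hD two_ne_zero)]
  constructor
  · intro h; linear_combination h / 2
  · intro h; linear_combination 2 * h

lemma ofReal_sub_two_add_I_mul_ne_zero {s t : ℝ} (hs : s ≠ 2) : (s : ℂ) - 2 + I * t ≠ 0 := by
  intro h
  apply hs
  simpa [sub_eq_zero] using congrArg re h

lemma add_I_mul_eq_I_mul_iff {u₀ u₁ v₀ v₁ p q : ℝ} :
    (v₀ = -u₁ + p ∧ v₁ = u₀ + q) ↔ (u₀ : ℂ) + u₁ * I + I * (v₀ + v₁ * I) = I * (p + q * I) := by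
  rw [Complex.ext_iff]
  simp only [add_re, ofReal_re, mul_re, I_re, mul_zero, ofReal_im, I_im, mul_one, sub_self, add_zero,
    zero_mul, add_im, mul_im, zero_add, one_mul, zero_sub]
  constructor <;> rintro ⟨h, h'⟩ <;> exact ⟨by linarith, by linarith⟩

section

variable {a₁ a₂ b₁ b₂ : ℝ} {x y : Fin 4 → ℝ}

lemma mulVec_normalJ_eq_iff :
    y = (normalJ a₁ a₂ b₁ b₂).mulVec x ↔
      (y 0 = -x 1 + (a₁ * x 2 + a₂ * x 3) ∧
        y 1 = x 0 + ((a₁ * b₁ * b₂ - a₂ * b₁ ^ 2 - a₁ * b₁ - a₂) / (b₂ - 1) * x 2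
          + (a₁ * b₂ - a₂ * b₁ - a₁) * x 3)) ∧
      (y 2 = b₁ * x 2 + (-1 + b₂) * x 3 ∧
        y 3 = (1 + (b₁ ^ 2 + b₂) / (1 - b₂)) * x 2 - b₁ * x 3) := by
  simp [funext_iff, Fin.forall_fin_succ, normalJ, dotProduct, Fin.sum_univ_four,
    ← sub_eq_add_neg, and_assoc, add_assoc]

lemma normalJ_lower_rows_iff (hb : b₂ ≠ 1) :
    (y 2 = b₁ * x 2 + (-1 + b₂) * x 3 ∧
        y 3 = (1 + (b₁ ^ 2 + b₂) / (1 - b₂)) * x 2 - b₁ * x 3) ↔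
      ((x 2 : ℂ) + x 3 * I + I * (y 2 + y 3 * I)) * (b₂ - 2 + I * b₁) =
        (b₂ - I * b₁) * starRingEnd ℂ ((x 2 : ℂ) + x 3 * I - I * (y 2 + y 3 * I)) := by
  have row₃ : y 3 = (1 + (b₁ ^ 2 + b₂) / (1 - b₂)) * x 2 - b₁ * x 3 ↔
      (1 - b₂) * (y 3 + b₁ * x 3) = (1 + b₁ ^ 2) * x 2 := by
    have : 1 - b₂ ≠ 0 := sub_ne_zero.mpr hb.symm
    field_simp
    constructor <;> intro h <;> linear_combination h
  rw [row₃, Complex.ext_iff]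
  simp only [mul_re, add_re, ofReal_re, I_re, mul_zero, ofReal_im, I_im, mul_one, sub_self,
    add_zero, zero_mul, add_im, mul_im, zero_add, one_mul, zero_sub, sub_re, re_ofNat, sub_im, im_ofNat,
    map_sub, map_add, conj_ofReal, map_mul, conj_I, mul_neg, neg_mul, sub_neg_eq_add, sub_zero, neg_re,
    neg_zero, neg_im]
  constructor
  · rintro ⟨h₂, h₃⟩
    exact ⟨by linear_combination 2 * h₃ - 2 * b₁ * h₂, by linear_combination -2 * h₂⟩
  · rintro ⟨e₁, e₂⟩
    have h₂ : y 2 = b₁ * x 2 + (-1 + b₂) * x 3 := by linear_combination -e₂ / 2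
    exact ⟨h₂, by linear_combination e₁ / 2 + b₁ * h₂⟩

lemma normalJ_upper_identity (hb : b₂ ≠ 1)
    (hk : y 2 = b₁ * x 2 + (-1 + b₂) * x 3 ∧
        y 3 = (1 + (b₁ ^ 2 + b₂) / (1 - b₂)) * x 2 - b₁ * x 3) :
    I * ((a₁ * x 2 + a₂ * x 3 : ℝ) + ((a₁ * b₁ * b₂ - a₂ * b₁ ^ 2 - a₁ * b₁ - a₂) / (b₂ - 1) * x 2
          + (a₁ * b₂ - a₂ * b₁ - a₁) * x 3 : ℝ) * I) * (b₂ - 2 + I * b₁) =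
      (a₂ + I * (a₁ * b₂ - a₂ * b₁ - a₁)) *
        starRingEnd ℂ ((x 2 : ℂ) + x 3 * I - I * (y 2 + y 3 * I)) := by
  obtain ⟨h₂, h₃⟩ := hk
  generalize he : 1 + (b₁ ^ 2 + b₂) / (1 - b₂) = e at h₃
  have he' : (1 - b₂) * e = 1 + b₁ ^ 2 := by
    rw [← he]; field_simp [sub_ne_zero.mpr hb.symm]; ring
  -- the `(1, 2)` entry of `J` is `a₁ J₂₂ + a₂ J₃₂`
  have hc : (a₁ * b₁ * b₂ - a₂ * b₁ ^ 2 - a₁ * b₁ - a₂) / (b₂ - 1) = a₂ * e + a₁ * b₁ := by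
    rw [div_eq_iff (sub_ne_zero.mpr hb)]
    linear_combination a₂ * he'
  rw [hc, h₂, h₃, Complex.ext_iff]
  simp only [ofReal_add, ofReal_mul, ofReal_sub, mul_re, I_re, add_re, ofReal_re, ofReal_im,
    mul_zero, sub_zero, add_im, mul_im, zero_mul, add_zero, sub_re, sub_im, sub_self, I_im, mul_one,
    zero_add, one_mul, zero_sub, neg_add_rev, re_ofNat, im_ofNat, ofReal_neg, ofReal_one, map_sub,
    map_add, conj_ofReal, map_mul, conj_I, mul_neg, map_neg, map_one, neg_mul, sub_neg_eq_add, neg_re,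
    neg_zero, one_re, neg_im, one_im, neg_sub]
  constructor
  · linear_combination a₂ * x 2 * he'
  · linear_combination a₁ * x 2 * he'

lemma normalJ_upper_rows_iff (hb₁ : b₂ ≠ 1) (hb₂ : b₂ ≠ 2)
    (hk : y 2 = b₁ * x 2 + (-1 + b₂) * x 3 ∧
        y 3 = (1 + (b₁ ^ 2 + b₂) / (1 - b₂)) * x 2 - b₁ * x 3) :
    (y 0 = -x 1 + (a₁ * x 2 + a₂ * x 3) ∧
        y 1 = x 0 + ((a₁ * b₁ * b₂ - a₂ * b₁ ^ 2 - a₁ * b₁ - a₂) / (b₂ - 1) * x 2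
          + (a₁ * b₂ - a₂ * b₁ - a₁) * x 3)) ↔
      ((x 0 : ℂ) + x 1 * I + I * (y 0 + y 1 * I)) * (b₂ - 2 + I * b₁) =
        (a₂ + I * (a₁ * b₂ - a₂ * b₁ - a₁)) *
          starRingEnd ℂ ((x 2 : ℂ) + x 3 * I - I * (y 2 + y 3 * I)) := by
  rw [add_I_mul_eq_I_mul_iff, ← normalJ_upper_identity hb₁ hk,
    mul_left_inj' (ofReal_sub_two_add_I_mul_ne_zero hb₂)]

end

theorem stmt17_general (U : Set (Fin 4 → ℝ))
    (a₁ a₂ b₁ b₂ : (Fin 4 → ℝ) → ℝ) (hb₂ : ∀ p ∈ U, |b₂ p| < 1)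
    (J : (Fin 4 → ℝ) → Matrix (Fin 4) (Fin 4) ℝ)
    (hJ : ∀ p, J p = Matrix.of
      ![![0, -1, a₁ p, a₂ p],
        ![1, 0,
          (a₁ p * b₁ p * b₂ p - a₂ p * (b₁ p) ^ 2 - a₁ p * b₁ p - a₂ p) / (b₂ p - 1),
          a₁ p * b₂ p - a₂ p * b₁ p - a₁ p],
        ![0, 0, b₁ p, -1 + b₂ p],
        ![0, 0, 1 + ((b₁ p) ^ 2 + b₂ p) / (1 - b₂ p), -(b₁ p)]])
    (β₁ β₂ : (Fin 4 → ℝ) → ℂ)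
    (hβ₁ : ∀ p, β₁ p = ((b₂ p : ℂ) - Complex.I * (b₁ p : ℂ)) /
      ((b₂ p : ℂ) - 2 + Complex.I * (b₁ p : ℂ)))
    (hβ₂ : ∀ p, β₂ p = ((a₂ p : ℂ) + Complex.I *
        ((a₁ p : ℂ) * (b₂ p : ℂ) - (a₂ p : ℂ) * (b₁ p : ℂ) - (a₁ p : ℂ))) /
      ((b₂ p : ℂ) - 2 + Complex.I * (b₁ p : ℂ)))
    (Ω : Set ℂ) (f : ℂ → (Fin 4 → ℝ)) (hf : MapsTo f Ω U)
    (z₀ : ℂ) (hz₀ : z₀ ∈ Ω) (fx fy : Fin 4 → ℝ) :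
    fy = (J (f z₀)).mulVec fx ↔
      ((((fx 0 : ℂ) + (fx 1 : ℂ) * Complex.I) +
          Complex.I * ((fy 0 : ℂ) + (fy 1 : ℂ) * Complex.I)) / 2 =
        β₂ (f z₀) * starRingEnd ℂ
          ((((fx 2 : ℂ) + (fx 3 : ℂ) * Complex.I) -
            Complex.I * ((fy 2 : ℂ) + (fy 3 : ℂ) * Complex.I)) / 2)) ∧
      ((((fx 2 : ℂ) + (fx 3 : ℂ) * Complex.I) +
          Complex.I * ((fy 2 : ℂ) + (fy 3 : ℂ) * Complex.I)) / 2 =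
        β₁ (f z₀) * starRingEnd ℂ
          ((((fx 2 : ℂ) + (fx 3 : ℂ) * Complex.I) -
            Complex.I * ((fy 2 : ℂ) + (fy 3 : ℂ) * Complex.I)) / 2)) := by
  have hb : b₂ (f z₀) < 1 := (abs_lt.mp (hb₂ _ (hf hz₀))).2
  have hb' : b₂ (f z₀) ≠ 2 := (hb.trans one_lt_two).ne
  have hD := ofReal_sub_two_add_I_mul_ne_zero (t := b₁ (f z₀)) hb'
  have hJ₀ : J (f z₀) = normalJ (a₁ (f z₀)) (a₂ (f z₀)) (b₁ (f z₀)) (b₂ (f z₀)) := hJ _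
  rw [hβ₁, hβ₂, eq_div_mul_conj_half_iff hD, eq_div_mul_conj_half_iff hD, hJ₀,
    mulVec_normalJ_eq_iff, ← normalJ_lower_rows_iff hb.ne]
  exact and_congr_left (normalJ_upper_rows_iff hb.ne hb')

/-- Lemma (lem5.1): the J-holomorphy equation in normal coordinates is equivalent to
the pair of complex equations with coefficients β₁, β₂. -/
theorem stmt17 (U : Set (Fin 4 → ℝ)) (hU : IsOpen U)
    (a₁ a₂ b₁ b₂ : (Fin 4 → ℝ) → ℝ) (hb₂ : ∀ p ∈ U, |b₂ p| < 1)
    (J : (Fin 4 → ℝ) → Matrix (Fin 4) (Fin 4) ℝ)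
    (hJ : ∀ p, J p = Matrix.of
      ![![0, -1, a₁ p, a₂ p],
        ![1, 0,
          (a₁ p * b₁ p * b₂ p - a₂ p * (b₁ p) ^ 2 - a₁ p * b₁ p - a₂ p) / (b₂ p - 1),
          a₁ p * b₂ p - a₂ p * b₁ p - a₁ p],
        ![0, 0, b₁ p, -1 + b₂ p],
        ![0, 0, 1 + ((b₁ p) ^ 2 + b₂ p) / (1 - b₂ p), -(b₁ p)]])
    (β₁ β₂ : (Fin 4 → ℝ) → ℂ)
    (hβ₁ : ∀ p, β₁ p = ((b₂ p : ℂ) - Complex.I * (b₁ p : ℂ)) /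
      ((b₂ p : ℂ) - 2 + Complex.I * (b₁ p : ℂ)))
    (hβ₂ : ∀ p, β₂ p = ((a₂ p : ℂ) + Complex.I *
        ((a₁ p : ℂ) * (b₂ p : ℂ) - (a₂ p : ℂ) * (b₁ p : ℂ) - (a₁ p : ℂ))) /
      ((b₂ p : ℂ) - 2 + Complex.I * (b₁ p : ℂ)))
    (Ω : Set ℂ) (hΩ : IsOpen Ω) (f : ℂ → (Fin 4 → ℝ)) (hf : MapsTo f Ω U)
    (z₀ : ℂ) (hz₀ : z₀ ∈ Ω) (fx fy : Fin 4 → ℝ)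
    (hfx : HasDerivAt (fun t : ℝ => f (z₀ + ↑t)) fx 0)
    (hfy : HasDerivAt (fun t : ℝ => f (z₀ + ↑t * Complex.I)) fy 0) :
    fy = (J (f z₀)).mulVec fx ↔
      ((((fx 0 : ℂ) + (fx 1 : ℂ) * Complex.I) +
          Complex.I * ((fy 0 : ℂ) + (fy 1 : ℂ) * Complex.I)) / 2 =
        β₂ (f z₀) * starRingEnd ℂ
          ((((fx 2 : ℂ) + (fx 3 : ℂ) * Complex.I) -
            Complex.I * ((fy 2 : ℂ) + (fy 3 : ℂ) * Complex.I)) / 2)) ∧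
      ((((fx 2 : ℂ) + (fx 3 : ℂ) * Complex.I) +
          Complex.I * ((fy 2 : ℂ) + (fy 3 : ℂ) * Complex.I)) / 2 =
        β₁ (f z₀) * starRingEnd ℂ
          ((((fx 2 : ℂ) + (fx 3 : ℂ) * Complex.I) -
            Complex.I * ((fy 2 : ℂ) + (fy 3 : ℂ) * Complex.I)) / 2)) :=
  stmt17_general U a₁ a₂ b₁ b₂ hb₂ J hJ β₁ β₂ hβ₁ hβ₂ Ω f hf z₀ hz₀ fx fy
end

section
/- There exist a continuous map J : ℝ⁴ → M₄(ℝ) with J(p)² = −Id for every p ∈ ℝ⁴ and with J(p) equal to the standard complex structure matrix J₀ for all p outside some bounded set, together with a map u : ℂ → ℝ⁴ which is (real, Fréchet) differentiable at every point of ℂ and satisfies Du(z) ∘ J_std = J(u(z)) ∘ Du(z) at every z ∈ ℂ (where Du(z) : ℝ² → ℝ⁴ is the total derivative), such that u is not continuously differentiable: the partial derivatives of u are unbounded on some neighborhood of a point. That is, a continuous almost complex structure on ℝ⁴ can admit a differentiable J-holomorphic curve which is not of class C¹. -/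
open Complex MeasureTheory Set Metric Topology
open scoped ContDiff

/-!
Write `ℝ⁴ = ℂ²` and take `u z = (z, v z)`. If `Dv(z) w = P w + Q(z) w̄`, then `u` is
`J`-holomorphic for `J = [[J_std, 0], [A, J_std]]` with `A w = -2 i Q(z) w̄` (cut off in the
fibre direction), and `J` is continuous as soon as `Q = ∂̄v` is. So it suffices to find `v`,
differentiable everywhere, with `∂̄v` continuous but `∂v` unbounded near `0`. Take for `v` a sum
of bumps on disjoint discs accumulating at `0`, the `n`-th being a rescaled copy of
`ζ ↦ log (|ζ|² + δₙ) ζ` (cut off) times `1/(n+1)`. Its `∂̄`, roughly `ζ² / (|ζ|² + δₙ)`, is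
bounded uniformly in `δₙ`, so `∂̄v → 0` at `0`; its `∂` at the centre is
`log δₙ / (n + 1) = -(n + 1)`.
-/

open Filter Asymptotics ComplexConjugate
open Real (smoothTransition)

namespace NonC1JCurve

/-- The `ℝ`-linear map `w ↦ a w + b w̄`, with Wirtinger derivatives `∂ = a`, `∂̄ = b`. -/
noncomputable def wirtingerCLM (a b : ℂ) : ℂ →L[ℝ] ℂ :=
  a • ContinuousLinearMap.id ℝ ℂ + b • Complex.conjCLE.toContinuousLinearMap

@[simp]
lemma wirtingerCLM_apply (a b w : ℂ) : wirtingerCLM a b w = a * w + b * conj w := by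
  simp [wirtingerCLM]

lemma hasFDerivAt_ofReal_comp_norm_sq_mul {h : ℝ → ℝ} {h' : ℝ} {ζ : ℂ}
    (hh : HasDerivAt h h' (‖ζ‖ ^ 2)) :
    HasFDerivAt (fun ζ : ℂ => (h (‖ζ‖ ^ 2) : ℂ) * ζ)
      (wirtingerCLM (h (‖ζ‖ ^ 2) + ‖ζ‖ ^ 2 * h') (h' * ζ ^ 2)) ζ := by
  have hcomp := ofRealCLM.hasFDerivAt.comp ζ
    (hh.comp_hasFDerivAt ζ (hasStrictFDerivAt_norm_sq ζ).hasFDerivAt)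
  refine (hcomp.mul (hasFDerivAt_id ζ)).congr_fderiv (ContinuousLinearMap.ext fun w => ?_)
  have hnorm : ((‖ζ‖ ^ 2 : ℝ) : ℂ) = ζ * conj ζ := by
    rw [Complex.mul_conj, Complex.normSq_eq_norm_sq]
  have hinner : ((inner ℝ ζ w : ℝ) : ℂ) * 2 = ζ * conj w + conj ζ * w := by
    rw [Complex.inner]; apply Complex.ext <;> simp <;> ring
  simp only [Function.comp_apply, ofRealCLM_apply, add_apply,
    smul_apply, ContinuousLinearMap.comp_apply, ContinuousLinearMap.id_apply,
    coe_innerSL_apply, nsmul_eq_mul, smul_eq_mul, wirtingerCLM_apply, id_eq]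
  push_cast at hnorm ⊢
  linear_combination (h' * ζ) * hinner - h' * w * hnorm

lemma deriv_smoothTransition_eq_zero {x : ℝ} (hx : x ∉ Icc 0 1) :
    deriv smoothTransition x = 0 := by
  rw [mem_Icc, not_and_or, not_le, not_le] at hx
  rcases hx with hx | hx
  · have : smoothTransition =ᶠ[𝓝 x] fun _ => 0 := by
      filter_upwards [Iio_mem_nhds hx] with y hy using smoothTransition.zero_of_nonpos hy.le
    rw [this.deriv_eq, deriv_const]
  · have : smoothTransition =ᶠ[𝓝 x] fun _ => 1 := by
      filter_upwards [Ioi_mem_nhds hx] with y hy using smoothTransition.one_of_one_le hy.le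
    rw [this.deriv_eq, deriv_const]

lemma continuous_deriv_smoothTransition : Continuous (deriv smoothTransition) :=
  (smoothTransition.contDiff (n := 1)).continuous_deriv le_rfl

lemma exists_abs_deriv_smoothTransition_le : ∃ K, ∀ x, |deriv smoothTransition x| ≤ K :=
  continuous_deriv_smoothTransition.bounded_above_of_compact_support
    (HasCompactSupport.intro isCompact_Icc fun _ => deriv_smoothTransition_eq_zero)

/-- The radial profile `s ↦ log (s + δ)`, cut off smoothly between `s = 1/2` and `s = 3/4`. -/
noncomputable def profile (δ s : ℝ) : ℝ := smoothTransition (3 - 4 * s) * Real.log (s + δ)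

noncomputable def profileDeriv (δ s : ℝ) : ℝ :=
  -4 * deriv smoothTransition (3 - 4 * s) * Real.log (s + δ) +
    smoothTransition (3 - 4 * s) / (s + δ)

lemma hasDerivAt_profile {δ s : ℝ} (hs : 0 < s + δ) :
    HasDerivAt (profile δ) (profileDeriv δ s) s := by
  have hφ : HasDerivAt (fun s => smoothTransition (3 - 4 * s))
      (deriv smoothTransition (3 - 4 * s) * -4) s :=
    (smoothTransition.contDiff (n := 1).differentiable one_ne_zero _).hasDerivAt.comp s
      (((hasDerivAt_id s).const_mul 4).const_sub 3 |>.congr_deriv (by ring))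
  have hlog : HasDerivAt (fun s => Real.log (s + δ)) (1 / (s + δ)) s :=
    ((hasDerivAt_id' s).add_const δ).log hs.ne'
  exact (hφ.mul hlog).congr_deriv (by unfold profileDeriv; ring)

lemma profile_zero (δ : ℝ) : profile δ 0 = Real.log δ := by
  simp [profile, smoothTransition.one_of_one_le]

lemma profile_eq_zero {δ s : ℝ} (hs : 3 / 4 ≤ s) : profile δ s = 0 := by
  simp [profile, smoothTransition.zero_of_nonpos (by linarith : 3 - 4 * s ≤ 0)]

lemma profileDeriv_eq_zero {δ s : ℝ} (hs : 1 ≤ s) : profileDeriv δ s = 0 := by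
  simp [profileDeriv, smoothTransition.zero_of_nonpos (by linarith : 3 - 4 * s ≤ 0),
    deriv_smoothTransition_eq_zero (notMem_Icc_of_lt (by linarith : 3 - 4 * s < 0))]

lemma abs_profile_sq_mul_le {δ t : ℝ} (hδ : 0 < δ) (hδ' : δ ≤ 1 / 2) (ht : 0 ≤ t) :
    |profile δ (t ^ 2)| * t ≤ 2 := by
  rcases le_or_gt (3 / 4) (t ^ 2) with hbig | hsmall
  · rw [profile_eq_zero hbig]; simp
  rw [profile, abs_mul, abs_of_nonneg (smoothTransition.nonneg _), mul_assoc]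
  set x := t ^ 2 + δ
  have hx : 0 < x := by positivity
  have hlog : |Real.log x| * t ≤ 2 := by
    rcases le_or_gt 1 x with hx1 | hx1
    · have : Real.log x ≤ x - 1 := Real.log_le_sub_one_of_pos hx
      rw [abs_of_nonneg (Real.log_nonneg hx1)]
      nlinarith
    · -- with `y = √x`, `|log x| * t ≤ 2 |log y * y| < 2`
      have hy := Real.abs_log_mul_self_lt (√x) (Real.sqrt_pos.2 hx)
        (Real.sqrt_le_one.2 hx1.le)
      rw [Real.log_sqrt hx.le, abs_mul, abs_div, abs_two,
        abs_of_pos (Real.sqrt_pos.2 hx)] at hy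
      have htx : t ≤ √x := Real.le_sqrt_of_sq_le (by linarith)
      nlinarith [abs_nonneg (Real.log x)]
  have hφ := smoothTransition.le_one (3 - 4 * t ^ 2)
  nlinarith [abs_nonneg (Real.log x), smoothTransition.nonneg (3 - 4 * t ^ 2)]

lemma abs_profileDeriv_mul_le {K δ s : ℝ} (hK : ∀ x, |deriv smoothTransition x| ≤ K)
    (hδ : 0 < δ) (hδ' : δ ≤ 1 / 2) (hs : 0 ≤ s) :
    |profileDeriv δ s| * s ≤ 4 * K + 1 := by
  set φ' := deriv smoothTransition (3 - 4 * s)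
  have hx : 0 < s + δ := by positivity
  have hquot : smoothTransition (3 - 4 * s) / (s + δ) * s ≤ 1 := by
    rw [div_mul_eq_mul_div, div_le_one hx]
    nlinarith [smoothTransition.le_one (3 - 4 * s), smoothTransition.nonneg (3 - 4 * s)]
  have hK0 : 0 ≤ K := (abs_nonneg _).trans (hK 0)
  have hlog : |φ'| * |Real.log (s + δ)| * s ≤ K := by
    by_cases hφ' : φ' = 0
    · simpa [hφ'] using hK0
    have hIcc : 3 - 4 * s ∈ Icc 0 1 := by
      by_contra h; exact hφ' (deriv_smoothTransition_eq_zero h)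
    have hs1 : 1 / 2 ≤ s ∧ s ≤ 3 / 4 := by constructor <;> linarith [hIcc.1, hIcc.2]
    have hlog1 : |Real.log (s + δ)| ≤ 1 := by
      rw [abs_le]
      constructor
      · have := Real.log_le_sub_one_of_pos (inv_pos.2 hx)
        rw [Real.log_inv] at this
        have : (s + δ)⁻¹ ≤ 2 := by rw [inv_le_comm₀ hx two_pos]; linarith
        linarith
      · linarith [Real.log_le_sub_one_of_pos hx]
    calc |φ'| * |Real.log (s + δ)| * s ≤ K * 1 * 1 := by
          gcongr
          · exact hK _
          · linarith
      _ = K := by ring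
  calc |profileDeriv δ s| * s
      ≤ (4 * (|φ'| * |Real.log (s + δ)|) + smoothTransition (3 - 4 * s) / (s + δ)) * s := by
        gcongr
        unfold profileDeriv
        refine (abs_add_le _ _).trans ?_
        rw [abs_mul, abs_mul, abs_neg, show |(4 : ℝ)| = 4 by norm_num,
          abs_of_nonneg (div_nonneg (smoothTransition.nonneg _) hx.le)]
        exact le_of_eq (by ring)
    _ ≤ 4 * K + 1 := by nlinarith

noncomputable def bump (δ : ℝ) (ζ : ℂ) : ℂ := (profile δ (‖ζ‖ ^ 2) : ℂ) * ζ

noncomputable def bumpDzbar (δ : ℝ) (ζ : ℂ) : ℂ := (profileDeriv δ (‖ζ‖ ^ 2) : ℂ) * ζ ^ 2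

lemma hasFDerivAt_bump {δ : ℝ} (hδ : 0 < δ) (ζ : ℂ) :
    HasFDerivAt (bump δ)
      (wirtingerCLM (profile δ (‖ζ‖ ^ 2) + ‖ζ‖ ^ 2 * profileDeriv δ (‖ζ‖ ^ 2)) (bumpDzbar δ ζ)) ζ :=
  hasFDerivAt_ofReal_comp_norm_sq_mul (hasDerivAt_profile (by positivity))

lemma bump_eq_zero {δ : ℝ} {ζ : ℂ} (h : 1 ≤ ‖ζ‖) : bump δ ζ = 0 := by
  simp [bump, profile_eq_zero (by nlinarith : 3 / 4 ≤ ‖ζ‖ ^ 2)]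

lemma bumpDzbar_eq_zero {δ : ℝ} {ζ : ℂ} (h : 1 ≤ ‖ζ‖) : bumpDzbar δ ζ = 0 := by
  simp [bumpDzbar, profileDeriv_eq_zero (by nlinarith : 1 ≤ ‖ζ‖ ^ 2)]

lemma norm_bump_le {δ : ℝ} (hδ : 0 < δ) (hδ' : δ ≤ 1 / 2) (ζ : ℂ) : ‖bump δ ζ‖ ≤ 2 := by
  rw [bump, norm_mul, Complex.norm_real, Real.norm_eq_abs]
  exact abs_profile_sq_mul_le hδ hδ' (norm_nonneg ζ)

lemma norm_bumpDzbar_le {K δ : ℝ} (hK : ∀ x, |deriv smoothTransition x| ≤ K) (hδ : 0 < δ)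
    (hδ' : δ ≤ 1 / 2) (ζ : ℂ) : ‖bumpDzbar δ ζ‖ ≤ 4 * K + 1 := by
  rw [bumpDzbar, norm_mul, Complex.norm_real, Real.norm_eq_abs, norm_pow]
  exact abs_profileDeriv_mul_le hK hδ hδ' (by positivity)

lemma continuous_bumpDzbar {δ : ℝ} (hδ : 0 < δ) : Continuous (bumpDzbar δ) := by
  have hpos : ∀ ζ : ℂ, ‖ζ‖ ^ 2 + δ ≠ 0 := fun ζ => by positivity
  unfold bumpDzbar profileDeriv
  have := continuous_deriv_smoothTransition
  fun_prop (disch := exact hpos)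

noncomputable def center (n : ℕ) : ℂ := ((1 / 2 : ℝ) ^ n : ℝ)

noncomputable def radius (n : ℕ) : ℝ := (1 / 2) ^ n / 8

noncomputable def disc (n : ℕ) : Set ℂ := closedBall (center n) (radius n)

lemma radius_pos (n : ℕ) : 0 < radius n := by unfold radius; positivity

lemma norm_center (n : ℕ) : ‖center n‖ = (1 / 2) ^ n := by
  simp [center]

lemma norm_mem_disc {n : ℕ} {z : ℂ} (hz : z ∈ disc n) :
    7 / 8 * (1 / 2 : ℝ) ^ n ≤ ‖z‖ ∧ ‖z‖ ≤ 9 / 8 * (1 / 2 : ℝ) ^ n := by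
  rw [disc, mem_closedBall, dist_eq_norm, radius] at hz
  have h₁ := norm_sub_norm_le z (center n)
  have h₂ := norm_sub_norm_le (center n) z
  rw [norm_sub_rev, norm_center] at h₂
  rw [norm_center] at h₁
  constructor <;> linarith

lemma zero_notMem_disc (n : ℕ) : (0 : ℂ) ∉ disc n := fun h => by
  have := norm_mem_disc h
  simp only [norm_zero] at this
  linarith [this.1, pow_pos (by norm_num : (0 : ℝ) < 1 / 2) n]

lemma norm_mul_fourteen_le_of_mem_disc {m n : ℕ} {z w : ℂ} (hmn : m < n) (hz : z ∈ disc m)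
    (hw : w ∈ disc n) : 14 * ‖w‖ ≤ 9 * ‖z‖ := by
  have hpow : 2 * (1 / 2 : ℝ) ^ n ≤ (1 / 2) ^ m := by
    have := pow_le_pow_of_le_one (by norm_num : (0 : ℝ) ≤ 1 / 2) (by norm_num) hmn
    rw [pow_succ] at this
    linarith
  linarith [(norm_mem_disc hz).1, (norm_mem_disc hw).2]

lemma notMem_disc_of_mem_disc {m n : ℕ} {z : ℂ} (hmn : m ≠ n) (hz : z ∈ disc m) :
    z ∉ disc n := fun hz' => by
  have hpos : 0 < ‖z‖ := norm_pos_iff.2 fun h => zero_notMem_disc m (h ▸ hz)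
  rcases hmn.lt_or_gt with h | h
  · linarith [norm_mul_fourteen_le_of_mem_disc h hz hz']
  · linarith [norm_mul_fourteen_le_of_mem_disc h hz' hz]

lemma exists_eventually_notMem_disc {z : ℂ} (hz : z ≠ 0) :
    ∃ n, ∀ᶠ w in 𝓝 z, ∀ m ≠ n, w ∉ disc m := by
  have hρ : 0 < ‖z‖ := norm_pos_iff.2 hz
  have hball : ball z (‖z‖ / 8) ∈ 𝓝 z := ball_mem_nhds z (by positivity)
  -- an annulus of ratio `9/7 < 14/9` meets at most one disc
  have hnorm : ∀ w ∈ ball z (‖z‖ / 8), 7 / 8 * ‖z‖ < ‖w‖ ∧ ‖w‖ < 9 / 8 * ‖z‖ := fun w hw => by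
    rw [mem_ball, dist_eq_norm] at hw
    have := abs_norm_sub_norm_le w z
    constructor <;> linarith [abs_le.1 this]
  by_cases hmeet : ∃ n, ∃ w ∈ ball z (‖z‖ / 8), w ∈ disc n
  · obtain ⟨n, w, hwU, hw⟩ := hmeet
    refine ⟨n, ?_⟩
    filter_upwards [hball] with w' hw'U m hmn hw'
    have h := hnorm w hwU
    have h' := hnorm w' hw'U
    rcases hmn.lt_or_gt with hlt | hlt
    · linarith [norm_mul_fourteen_le_of_mem_disc hlt hw' hw]
    · linarith [norm_mul_fourteen_le_of_mem_disc hlt hw hw']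
  · push Not at hmeet
    exact ⟨0, by filter_upwards [hball] with w hw m _ using hmeet m w hw⟩

lemma eventually_le_of_mem_disc (N : ℕ) : ∀ᶠ w in 𝓝 (0 : ℂ), ∀ k, w ∈ disc k → N ≤ k := by
  filter_upwards [ball_mem_nhds (0 : ℂ) (by positivity : (0 : ℝ) < 7 / 8 * (1 / 2) ^ N)]
    with w hw k hk
  by_contra! hkN
  rw [mem_ball, dist_zero_right] at hw
  have : (1 / 2 : ℝ) ^ N ≤ (1 / 2) ^ k := pow_le_pow_of_le_one (by norm_num) (by norm_num) hkN.le
  linarith [(norm_mem_disc hk).1]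

section DiscSeries

variable {E : Type*} [NormedAddCommGroup E] {f : ℕ → ℂ → E}

lemma tsum_eq_of_mem_disc (hf : ∀ n w, w ∉ disc n → f n w = 0) {n : ℕ} {w : ℂ}
    (hw : w ∈ disc n) : ∑' m, f m w = f n w :=
  tsum_eq_single n fun _ hm => hf _ _ (notMem_disc_of_mem_disc hm.symm hw)

lemma tsum_eq_zero_of_notMem_disc (hf : ∀ n w, w ∉ disc n → f n w = 0) {w : ℂ}
    (hw : ∀ n, w ∉ disc n) : ∑' m, f m w = 0 := by
  simp [hf _ _ (hw _)]

lemma tsum_eventuallyEq (hf : ∀ n w, w ∉ disc n → f n w = 0) {n : ℕ} {z : ℂ}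
    (hn : ∀ᶠ w in 𝓝 z, ∀ m ≠ n, w ∉ disc m) : (fun w => ∑' m, f m w) =ᶠ[𝓝 z] f n :=
  hn.mono fun w hw => tsum_eq_single n fun m hm => hf m w (hw m hm)

lemma tsum_isLittleO_nhds_zero {F : Type*} [NormedAddCommGroup F] {G : ℂ → F} {a : ℕ → ℝ}
    (hf : ∀ n w, w ∉ disc n → f n w = 0) (ha : Tendsto a atTop (𝓝 0))
    (hfG : ∀ n w, w ∈ disc n → ‖f n w‖ ≤ a n * ‖G w‖) :
    (fun w => ∑' m, f m w) =o[𝓝 0] G := by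
  refine isLittleO_iff.2 fun c hc => ?_
  obtain ⟨N, hN⟩ := eventually_atTop.1 (ha.eventually (eventually_le_nhds hc))
  filter_upwards [eventually_le_of_mem_disc N] with w hw
  by_cases hmem : ∃ n, w ∈ disc n
  · obtain ⟨n, hn⟩ := hmem
    rw [tsum_eq_of_mem_disc hf hn]
    exact (hfG n w hn).trans (mul_le_mul_of_nonneg_right (hN n (hw n hn)) (norm_nonneg _))
  · push Not at hmem
    rw [tsum_eq_zero_of_notMem_disc hf hmem, norm_zero]
    positivity

end DiscSeries

lemma hasFDerivAt_wirtingerCLM_rescale {g : ℂ → ℂ} {P Q c z : ℂ} {a r : ℝ} (hr : r ≠ 0)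
    (hg : HasFDerivAt g (wirtingerCLM P Q) ((z - c) / r)) :
    HasFDerivAt (fun z => ((a * r : ℝ) : ℂ) * g ((z - c) / r))
      (wirtingerCLM (a * P) (a * Q)) z := by
  have hrescale : HasFDerivAt (fun z : ℂ => (z - c) / r)
      ((r : ℂ)⁻¹ • ContinuousLinearMap.id ℝ ℂ) z :=
    ((hasFDerivAt_id z).sub_const c).mul_const (r : ℂ)⁻¹
  refine ((hg.comp z hrescale).const_mul _).congr_fderiv (ContinuousLinearMap.ext fun w => ?_)
  have hr' : (r : ℂ) ≠ 0 := Complex.ofReal_ne_zero.2 hr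
  simp only [smul_apply, ContinuousLinearMap.comp_apply, ContinuousLinearMap.id_apply,
    wirtingerCLM_apply, smul_eq_mul, map_mul, map_inv₀,
    Complex.conj_ofReal]
  push_cast
  field_simp

noncomputable def weight (n : ℕ) : ℝ := ((n : ℝ) + 1)⁻¹

/-- Chosen so that `weight n * log (depth n) = -(n + 1)`. -/
noncomputable def depth (n : ℕ) : ℝ := Real.exp (-((n : ℝ) + 1) ^ 2)

noncomputable def bumpTerm (n : ℕ) (z : ℂ) : ℂ :=
  ((weight n * radius n : ℝ) : ℂ) * bump (depth n) ((z - center n) / (radius n : ℝ))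

noncomputable def dzbarTerm (n : ℕ) (z : ℂ) : ℂ :=
  (weight n : ℂ) * bumpDzbar (depth n) ((z - center n) / (radius n : ℝ))

noncomputable def fiberMap (z : ℂ) : ℂ := ∑' n, bumpTerm n z

noncomputable def fiberDzbar (z : ℂ) : ℂ := ∑' n, dzbarTerm n z

lemma weight_pos (n : ℕ) : 0 < weight n := by unfold weight; positivity

lemma weight_le_one (n : ℕ) : weight n ≤ 1 :=
  inv_le_one_of_one_le₀ (by linarith [n.cast_nonneg (α := ℝ)])

lemma tendsto_weight : Tendsto weight atTop (𝓝 0) := by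
  unfold weight
  simpa only [one_div] using tendsto_one_div_add_atTop_nhds_zero_nat (𝕜 := ℝ)

lemma depth_pos (n : ℕ) : 0 < depth n := Real.exp_pos _

lemma depth_le (n : ℕ) : depth n ≤ 1 / 2 := by
  have h1 : depth n ≤ Real.exp (-1) := by
    rw [depth, Real.exp_le_exp]
    nlinarith [n.cast_nonneg (α := ℝ)]
  have h2 : Real.exp (-1) ≤ 1 / 2 := by
    rw [Real.exp_neg, inv_le_comm₀ (Real.exp_pos 1) (by norm_num)]
    linarith [Real.add_one_le_exp (1 : ℝ)]
  linarith

lemma weight_mul_log_depth (n : ℕ) : weight n * Real.log (depth n) = -((n : ℝ) + 1) := by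
  rw [weight, depth, Real.log_exp]
  field_simp

lemma one_lt_norm_rescale {n : ℕ} {w : ℂ} (hw : w ∉ disc n) :
    1 < ‖(w - center n) / (radius n : ℝ)‖ := by
  rw [disc, mem_closedBall, dist_eq_norm, not_le] at hw
  rw [norm_div, Complex.norm_real, Real.norm_of_nonneg (radius_pos n).le,
    one_lt_div (radius_pos n)]
  exact hw

lemma bumpTerm_eq_zero {n : ℕ} {w : ℂ} (hw : w ∉ disc n) : bumpTerm n w = 0 := by
  rw [bumpTerm, bump_eq_zero (one_lt_norm_rescale hw).le, mul_zero]

lemma dzbarTerm_eq_zero {n : ℕ} {w : ℂ} (hw : w ∉ disc n) : dzbarTerm n w = 0 := by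
  rw [dzbarTerm, bumpDzbar_eq_zero (one_lt_norm_rescale hw).le, mul_zero]

lemma norm_bumpTerm_le (n : ℕ) (w : ℂ) : ‖bumpTerm n w‖ ≤ 2 * weight n * radius n := by
  rw [bumpTerm, norm_mul, Complex.norm_real,
    Real.norm_of_nonneg (mul_pos (weight_pos n) (radius_pos n)).le]
  nlinarith [norm_bump_le (depth_pos n) (depth_le n) ((w - center n) / (radius n : ℝ)),
    mul_pos (weight_pos n) (radius_pos n)]

lemma norm_bumpTerm_le_of_mem_disc {n : ℕ} {w : ℂ} (hw : w ∈ disc n) :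
    ‖bumpTerm n w‖ ≤ weight n * ‖w‖ := by
  have hr : 2 * radius n ≤ ‖w‖ := by
    have := (norm_mem_disc hw).1
    rw [radius]
    linarith [pow_pos (by norm_num : (0 : ℝ) < 1 / 2) n]
  nlinarith [norm_bumpTerm_le n w, weight_pos n]

lemma norm_dzbarTerm_le {K : ℝ} (hK : ∀ x, |deriv smoothTransition x| ≤ K) (n : ℕ) (w : ℂ) :
    ‖dzbarTerm n w‖ ≤ (4 * K + 1) * weight n := by
  rw [dzbarTerm, norm_mul, Complex.norm_real, Real.norm_of_nonneg (weight_pos n).le, mul_comm]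
  exact mul_le_mul_of_nonneg_right (norm_bumpDzbar_le hK (depth_pos n) (depth_le n) _)
    (weight_pos n).le

lemma hasFDerivAt_bumpTerm (n : ℕ) (z : ℂ) : ∃ P,
    HasFDerivAt (bumpTerm n) (wirtingerCLM P (dzbarTerm n z)) z :=
  ⟨_, hasFDerivAt_wirtingerCLM_rescale (radius_pos n).ne'
    (hasFDerivAt_bump (depth_pos n) ((z - center n) / (radius n : ℝ)))⟩

lemma hasFDerivAt_bumpTerm_center (n : ℕ) :
    HasFDerivAt (bumpTerm n) (wirtingerCLM (-((n : ℂ) + 1)) 0) (center n) := by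
  have h := hasFDerivAt_wirtingerCLM_rescale (a := weight n) (radius_pos n).ne'
    (hasFDerivAt_bump (depth_pos n) ((center n - center n) / (radius n : ℝ)))
  simp only [sub_self, zero_div, norm_zero, ne_eq, OfNat.ofNat_ne_zero, not_false_eq_true,
    zero_pow, profile_zero, ofReal_zero, zero_mul, add_zero, bumpDzbar, mul_zero] at h
  rwa [← ofReal_mul, weight_mul_log_depth, ofReal_neg, ofReal_add, ofReal_natCast,
    ofReal_one] at h

lemma norm_fiberMap_le (z : ℂ) : ‖fiberMap z‖ ≤ 1 / 4 := by
  by_cases hmem : ∃ n, z ∈ disc n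
  · obtain ⟨n, hn⟩ := hmem
    rw [fiberMap, tsum_eq_of_mem_disc (fun _ _ => bumpTerm_eq_zero) hn]
    have hr : radius n ≤ 1 / 8 := by
      rw [radius]; linarith [pow_le_one₀ (by norm_num : (0 : ℝ) ≤ 1 / 2) (by norm_num) (n := n)]
    nlinarith [norm_bumpTerm_le n z, weight_le_one n, weight_pos n, radius_pos n]
  · push Not at hmem
    rw [fiberMap, tsum_eq_zero_of_notMem_disc (fun _ _ => bumpTerm_eq_zero) hmem]
    norm_num

lemma fiberDzbar_zero : fiberDzbar 0 = 0 :=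
  tsum_eq_zero_of_notMem_disc (fun _ _ => dzbarTerm_eq_zero) zero_notMem_disc

lemma hasFDerivAt_fiberMap (z : ℂ) :
    ∃ P, HasFDerivAt fiberMap (wirtingerCLM P (fiberDzbar z)) z := by
  rcases eq_or_ne z 0 with rfl | hz
  · refine ⟨0, ?_⟩
    rw [fiberDzbar_zero, hasFDerivAt_iff_isLittleO_nhds_zero]
    have hzero : fiberMap 0 = 0 :=
      tsum_eq_zero_of_notMem_disc (fun _ _ => bumpTerm_eq_zero) zero_notMem_disc
    simp only [zero_add, hzero, sub_zero, wirtingerCLM_apply, zero_mul, add_zero]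
    exact tsum_isLittleO_nhds_zero (G := fun h => h) (fun _ _ => bumpTerm_eq_zero)
      tendsto_weight fun _ _ => norm_bumpTerm_le_of_mem_disc
  · obtain ⟨n, hn⟩ := exists_eventually_notMem_disc hz
    obtain ⟨P, hP⟩ := hasFDerivAt_bumpTerm n z
    rw [← (tsum_eventuallyEq (fun _ _ => dzbarTerm_eq_zero) hn).eq_of_nhds] at hP
    exact ⟨P, hP.congr_of_eventuallyEq (tsum_eventuallyEq (fun _ _ => bumpTerm_eq_zero) hn)⟩

lemma hasFDerivAt_fiberMap_center (n : ℕ) :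
    HasFDerivAt fiberMap (wirtingerCLM (-((n : ℂ) + 1)) 0) (center n) := by
  refine (hasFDerivAt_bumpTerm_center n).congr_of_eventuallyEq ?_
  filter_upwards [closedBall_mem_nhds (center n) (radius_pos n)] with w hw
  exact tsum_eq_of_mem_disc (fun _ _ => bumpTerm_eq_zero) hw

lemma continuous_fiberDzbar : Continuous fiberDzbar := by
  obtain ⟨K, hK⟩ := exists_abs_deriv_smoothTransition_le
  refine continuous_iff_continuousAt.2 fun z => ?_
  rcases eq_or_ne z 0 with rfl | hz
  · rw [ContinuousAt, fiberDzbar_zero, ← isLittleO_one_iff ℝ]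
    exact tsum_isLittleO_nhds_zero (fun _ _ => dzbarTerm_eq_zero)
      (by simpa using tendsto_weight.const_mul (4 * K + 1)) fun n w _ => by
        simpa using norm_dzbarTerm_le hK n w
  · obtain ⟨n, hn⟩ := exists_eventually_notMem_disc hz
    have hV := tsum_eventuallyEq (fun _ _ => dzbarTerm_eq_zero) hn
    refine ((continuous_const.mul ((continuous_bumpDzbar (depth_pos n)).comp ?_)).continuousAt
      (x := z)).congr hV.symm
    fun_prop

/-- The block matrix `[[J_std, 0], [A_c, J_std]]` with `A_c w = c w̄`; since `A_c` anticommutes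
with `J_std`, this is an almost complex structure for every `c`. -/
def acs (c : ℂ) : Matrix (Fin 4) (Fin 4) ℝ :=
  Matrix.of ![![0, -1, 0, 0], ![1, 0, 0, 0], ![c.re, c.im, 0, -1], ![c.im, -c.re, 1, 0]]

lemma acs_mul_self (c : ℂ) : acs c * acs c = -1 := by
  ext i j
  fin_cases i <;> fin_cases j <;> simp [acs, Matrix.mul_apply, Fin.sum_univ_four]

lemma acs_zero :
    acs 0 = Matrix.of ![![0, -1, 0, 0], ![1, 0, 0, 0], ![0, 0, 0, -1], ![0, 0, 1, 0]] := by
  simp [acs]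

lemma continuous_acs : Continuous acs := by
  refine continuous_pi fun i => continuous_pi fun j => ?_
  fin_cases i <;> fin_cases j <;> simp [acs] <;> fun_prop

def graph (v : ℂ → ℂ) (z : ℂ) : Fin 4 → ℝ := ![z.re, z.im, (v z).re, (v z).im]

noncomputable def graphCLM (L : ℂ →L[ℝ] ℂ) : ℂ →L[ℝ] (Fin 4 → ℝ) :=
  ContinuousLinearMap.pi ![reCLM, imCLM, reCLM.comp L, imCLM.comp L]

lemma hasFDerivAt_graph {v : ℂ → ℂ} {L : ℂ →L[ℝ] ℂ} {z : ℂ} (h : HasFDerivAt v L z) :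
    HasFDerivAt (graph v) (graphCLM L) z := by
  rw [hasFDerivAt_pi']
  intro i
  fin_cases i
  · exact reCLM.hasFDerivAt
  · exact imCLM.hasFDerivAt
  · exact reCLM.hasFDerivAt.comp z h
  · exact imCLM.hasFDerivAt.comp z h

lemma graphCLM_wirtingerCLM_I_mul (P Q w : ℂ) :
    graphCLM (wirtingerCLM P Q) (I * w) =
      (acs (-2 * I * Q)).mulVec (graphCLM (wirtingerCLM P Q) w) := by
  ext i
  fin_cases i <;> simp [graphCLM, acs, Matrix.mulVec, dotProduct, Fin.sum_univ_four] <;> ring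

lemma abs_re_apply_one_le_norm_graphCLM (L : ℂ →L[ℝ] ℂ) : |(L 1).re| ≤ ‖graphCLM L‖ := by
  calc |(L 1).re| = ‖graphCLM L 1 2‖ := by simp [graphCLM]
    _ ≤ ‖graphCLM L 1‖ := norm_le_pi_norm _ 2
    _ ≤ ‖graphCLM L‖ := by simpa using (graphCLM L).le_opNorm 1

def basePoint (p : Fin 4 → ℝ) : ℂ := ⟨p 0, p 1⟩

def fiberPoint (p : Fin 4 → ℝ) : ℂ := ⟨p 2, p 3⟩

/-- Equal to `1` on the image of `graph fiberMap`, which lies in `‖w‖ ≤ 1/4`, and to `0` for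
`‖w‖² ≥ 2`. -/
noncomputable def cutoff (p : Fin 4 → ℝ) : ℝ := smoothTransition (2 - ‖fiberPoint p‖ ^ 2)

noncomputable def almostComplexStructure (p : Fin 4 → ℝ) : Matrix (Fin 4) (Fin 4) ℝ :=
  acs (-2 * I * fiberDzbar (basePoint p) * cutoff p)

lemma continuous_almostComplexStructure : Continuous almostComplexStructure := by
  have hbase : Continuous basePoint :=
    equivRealProdCLM.symm.continuous.comp (by fun_prop : Continuous fun p : Fin 4 → ℝ => (p 0, p 1))
  have hfiber : Continuous fiberPoint :=
    equivRealProdCLM.symm.continuous.comp (by fun_prop : Continuous fun p : Fin 4 → ℝ => (p 2, p 3))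
  unfold almostComplexStructure cutoff
  have := continuous_fiberDzbar.comp hbase
  have := continuous_acs
  have := smoothTransition.continuous
  fun_prop

lemma almostComplexStructure_graph (z : ℂ) :
    almostComplexStructure (graph fiberMap z) = acs (-2 * I * fiberDzbar z) := by
  have hcut : cutoff (graph fiberMap z) = 1 := by
    refine smoothTransition.one_of_one_le ?_
    have := norm_fiberMap_le z
    have : ‖fiberPoint (graph fiberMap z)‖ = ‖fiberMap z‖ := by simp [fiberPoint, graph]
    nlinarith [norm_nonneg (fiberMap z)]
  rw [almostComplexStructure, hcut, ofReal_one, mul_one]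
  rfl

lemma norm_le_of_fiberDzbar_ne_zero {z : ℂ} (hz : fiberDzbar z ≠ 0) : ‖z‖ ≤ 9 / 8 := by
  by_cases hmem : ∃ n, z ∈ disc n
  · obtain ⟨n, hn⟩ := hmem
    linarith [(norm_mem_disc hn).2,
      pow_le_one₀ (by norm_num : (0 : ℝ) ≤ 1 / 2) (by norm_num) (n := n)]
  · push Not at hmem
    exact absurd (tsum_eq_zero_of_notMem_disc (fun _ _ => dzbarTerm_eq_zero) hmem) hz

lemma almostComplexStructure_eq_of_norm_gt {p : Fin 4 → ℝ} (hp : p ∉ closedBall 0 2) :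
    almostComplexStructure p =
      Matrix.of ![![0, -1, 0, 0], ![1, 0, 0, 0], ![0, 0, 0, -1], ![0, 0, 1, 0]] := by
  rw [← acs_zero, almostComplexStructure]
  congr 1
  by_contra hne
  apply hp
  have hcut : cutoff p ≠ 0 := fun h => hne (by simp [h])
  have hdzbar : fiberDzbar (basePoint p) ≠ 0 := fun h => hne (by simp [h])
  have hbase := norm_le_of_fiberDzbar_ne_zero hdzbar
  have hfiber : ‖fiberPoint p‖ ^ 2 < 2 := by
    by_contra h
    exact hcut (smoothTransition.zero_of_nonpos (by linarith))
  have hfiber' : ‖fiberPoint p‖ ≤ 2 := by nlinarith [norm_nonneg (fiberPoint p)]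
  rw [mem_closedBall, dist_zero_right, pi_norm_le_iff_of_nonneg zero_le_two]
  intro i
  fin_cases i
  · exact (abs_re_le_norm (basePoint p)).trans (by linarith)
  · exact (abs_im_le_norm (basePoint p)).trans (by linarith)
  · exact (abs_re_le_norm (fiberPoint p)).trans hfiber'
  · exact (abs_im_le_norm (fiberPoint p)).trans hfiber'

lemma le_norm_fderiv_graph_fiberMap_center (n : ℕ) :
    (n : ℝ) + 1 ≤ ‖fderiv ℝ (graph fiberMap) (center n)‖ := by
  have h := abs_re_apply_one_le_norm_graphCLM (wirtingerCLM (-((n : ℂ) + 1)) 0)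
  simp only [wirtingerCLM_apply, mul_one, zero_mul, add_zero, neg_re, add_re, natCast_re,
    one_re, abs_neg] at h
  rwa [(hasFDerivAt_graph (hasFDerivAt_fiberMap_center n)).fderiv,
    ← abs_of_pos (by positivity : (0 : ℝ) < n + 1)]

end NonC1JCurve

open NonC1JCurve

/-- Example (ex4.3): a continuous almost complex structure on ℝ⁴ admitting a
differentiable J-holomorphic curve which is not C¹. -/
theorem stmt19 : ∃ J : (Fin 4 → ℝ) → Matrix (Fin 4) (Fin 4) ℝ, ∃ u : ℂ → (Fin 4 → ℝ),
    Continuous J ∧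
    (∀ p, J p * J p = -1) ∧
    (∃ s : Set (Fin 4 → ℝ), Bornology.IsBounded s ∧ ∀ p ∉ s,
      J p = Matrix.of ![![0, -1, 0, 0], ![1, 0, 0, 0], ![0, 0, 0, -1], ![0, 0, 1, 0]]) ∧
    (∀ z, DifferentiableAt ℝ u z) ∧
    (∀ z w : ℂ, fderiv ℝ u z (Complex.I * w) = (J (u z)).mulVec (fderiv ℝ u z w)) ∧
    (∃ z₀ : ℂ, ∃ U ∈ 𝓝 z₀, ¬ ∃ C : ℝ, ∀ z ∈ U, ‖fderiv ℝ u z‖ ≤ C) := by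
  refine ⟨almostComplexStructure, graph fiberMap, continuous_almostComplexStructure,
    fun p => acs_mul_self _, ⟨closedBall 0 2, isBounded_closedBall,
      fun p => almostComplexStructure_eq_of_norm_gt⟩,
    fun z => (hasFDerivAt_fiberMap z).elim fun _ h => (hasFDerivAt_graph h).differentiableAt,
    fun z w => ?_, 0, univ, univ_mem, ?_⟩
  · obtain ⟨P, h⟩ := hasFDerivAt_fiberMap z
    rw [(hasFDerivAt_graph h).fderiv, almostComplexStructure_graph, graphCLM_wirtingerCLM_I_mul]
  · rintro ⟨C, hC⟩
    obtain ⟨n, hn⟩ := exists_nat_gt C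
    linarith [hC (center n) (mem_univ _), le_norm_fderiv_graph_fiberMap_center n]
end
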